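/- arXiv:1502.06278 — 4 statements merged into one kernel-verified Lean document; each statement's English description precedes it below -/
import Mathlib

section
/- If γ : [T₀,∞) → ℝⁿ is a C² curve satisfying ‖γ''(t)‖ = O(t^(-4/3)) as t → ∞ and ‖γ(t)‖ = O(t^(2/3)), then γ'(t) → 0 as t → ∞. -/
/-!
Apply the mean value inequality twice on `[t, 2t]`. The bound on `γ''` keeps `γ'` within
`O(t^(-1/3))` of `γ'(t)` there, so `γ(2t) - γ(t) = t γ'(t) + O(t^(2/3))`. Since the left-hand side
is `O(t^(2/3))` as well, `t ‖γ'(t)‖ = O(t^(2/3))`, i.e. `‖γ'(t)‖ = O(t^(-1/3))`.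
-/

open Filter Set Topology

variable {E : Type*} [NormedAddCommGroup E] [NormedSpace ℝ E] {f f' f'' : ℝ → E}

theorem mul_norm_deriv_le_of_norm_deriv_deriv_le {a b M : ℝ} (hab : a ≤ b)
    (hf : ∀ x ∈ Icc a b, HasDerivWithinAt f (f' x) (Icc a b) x)
    (hf' : ∀ x ∈ Icc a b, HasDerivWithinAt f' (f'' x) (Icc a b) x)
    (bound : ∀ x ∈ Icc a b, ‖f'' x‖ ≤ M) :
    (b - a) * ‖f' a‖ ≤ ‖f b‖ + ‖f a‖ + M * (b - a) ^ 2 := by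
  have ha : a ∈ Icc a b := left_mem_Icc.2 hab
  have hM : 0 ≤ M := (norm_nonneg _).trans (bound a ha)
  have hslow : ∀ x ∈ Icc a b, ‖f' x - f' a‖ ≤ M * (b - a) := fun x hx =>
    calc ‖f' x - f' a‖ ≤ M * ‖x - a‖ :=
          (convex_Icc a b).norm_image_sub_le_of_norm_hasDerivWithin_le hf' bound ha hx
      _ ≤ M * (b - a) := by
          rw [Real.norm_of_nonneg (sub_nonneg.2 hx.1)]
          exact mul_le_mul_of_nonneg_left (by linarith [hx.2]) hM
  have hlin : ‖(b - a) • f' a - (f b - f a)‖ ≤ M * (b - a) * (b - a) := by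
    have hg : ∀ x ∈ Icc a b,
        HasDerivWithinAt (fun x => f x - x • f' a) (f' x - f' a) (Icc a b) x := fun x hx => by
      have hsmul : HasDerivWithinAt (fun x : ℝ => x • f' a) (f' a) (Icc a b) x := by
        simpa using (hasDerivWithinAt_id x _).smul_const (f' a)
      exact (hf x hx).sub hsmul
    have := (convex_Icc a b).norm_image_sub_le_of_norm_hasDerivWithin_le hg hslow ha
      (right_mem_Icc.2 hab)
    have hrearr : (b - a) • f' a - (f b - f a) = -(f b - b • f' a - (f a - a • f' a)) := by
      module
    rwa [Real.norm_of_nonneg (sub_nonneg.2 hab), ← norm_neg, ← hrearr] at this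
  calc (b - a) * ‖f' a‖ = ‖(b - a) • f' a‖ := by
        rw [norm_smul, Real.norm_of_nonneg (sub_nonneg.2 hab)]
    _ ≤ ‖f b - f a‖ + ‖(b - a) • f' a - (f b - f a)‖ :=
        norm_le_norm_add_norm_sub' _ _
    _ ≤ ‖f b‖ + ‖f a‖ + M * (b - a) ^ 2 := by
        nlinarith [norm_sub_le (f b) (f a)]

theorem ContDiffOn.hasDerivAt_deriv_and_deriv_deriv {s : Set ℝ} {x : ℝ}
    (hf : ContDiffOn ℝ 2 f s) (hs : IsOpen s) (hx : x ∈ s) :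
    HasDerivAt f (deriv f x) x ∧ HasDerivAt (deriv f) (deriv (deriv f) x) x :=
  ⟨((hf.differentiableOn (by norm_num)).differentiableAt (hs.mem_nhds hx)).hasDerivAt,
    (((hf.deriv_of_isOpen hs (m := 1) (by norm_num)).differentiableOn (by norm_num))
      |>.differentiableAt (hs.mem_nhds hx)).hasDerivAt⟩

theorem tendsto_deriv_zero_of_norm_le_rpow {C p : ℝ} (hp : p < 1)
    (hf : ∀ᶠ t in atTop, HasDerivAt f (f' t) t) (hf' : ∀ᶠ t in atTop, HasDerivAt f' (f'' t) t)
    (h0 : ∀ᶠ t in atTop, ‖f t‖ ≤ C * t ^ p) (h2 : ∀ᶠ t in atTop, ‖f'' t‖ ≤ C * t ^ (p - 2)) :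
    Tendsto f' atTop (𝓝 0) := by
  obtain ⟨T, hT⟩ := eventually_atTop.1 ((hf.and hf').and ((h0.and h2).and (eventually_gt_atTop 0)))
  have hC : 0 ≤ C := by
    have hTp : 0 < T ^ p := Real.rpow_pos_of_pos (hT T le_rfl).2.2 p
    exact (mul_nonneg_iff_of_pos_right hTp).1 ((norm_nonneg _).trans (hT T le_rfl).2.1.1)
  have hbound : ∀ t ≥ T, ‖f' t‖ ≤ C * (2 ^ p + 2) * t ^ (p - 1) := by
    intro t ht
    have ht0 : 0 < t := (hT t ht).2.2
    have hIcc : ∀ x ∈ Icc t (2 * t), T ≤ x := fun x hx => ht.trans hx.1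
    have hmv := mul_norm_deriv_le_of_norm_deriv_deriv_le (a := t) (b := 2 * t)
      (M := C * t ^ (p - 2)) (by linarith)
      (fun x hx => (hT x (hIcc x hx)).1.1.hasDerivWithinAt)
      (fun x hx => (hT x (hIcc x hx)).1.2.hasDerivWithinAt)
      (fun x hx => (hT x (hIcc x hx)).2.1.2.trans <| mul_le_mul_of_nonneg_left
        (Real.rpow_le_rpow_of_nonpos ht0 hx.1 (by linarith)) hC)
    have h2t : ‖f (2 * t)‖ ≤ C * 2 ^ p * t ^ p := by
      rw [mul_assoc, ← Real.mul_rpow zero_le_two ht0.le]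
      exact (hT _ (by linarith)).2.1.1
    have hpow : t ^ (p - 2) * t ^ 2 = t ^ p := by
      rw [Real.rpow_sub ht0, Real.rpow_two]
      field_simp
    have hpow' : t ^ p = t * t ^ (p - 1) := by
      rw [Real.rpow_sub_one ht0.ne']
      field_simp
    rw [show 2 * t - t = t by ring, mul_assoc, hpow] at hmv
    refine le_of_mul_le_mul_left ?_ ht0
    calc t * ‖f' t‖ ≤ ‖f (2 * t)‖ + ‖f t‖ + C * t ^ p := hmv
      _ ≤ C * 2 ^ p * t ^ p + C * t ^ p + C * t ^ p := by
          gcongr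
          exact (hT t ht).2.1.1
      _ = t * (C * (2 ^ p + 2) * t ^ (p - 1)) := by
          rw [hpow']
          ring
  refine squeeze_zero_norm' (eventually_atTop.2 ⟨T, hbound⟩) ?_
  simpa [neg_sub] using (tendsto_rpow_neg_atTop (sub_pos.2 hp)).const_mul (C * (2 ^ p + 2))

theorem velocity_tendsto_zero_general
    (n : ℕ) (γ : ℝ → EuclideanSpace ℝ (Fin n)) (T₀ : ℝ)
    (hC2 : ContDiffOn ℝ 2 γ (Set.Ici T₀))
    (C : ℝ)
    (hacc : ∀ᶠ t in atTop, ‖deriv (deriv γ) t‖ ≤ C * t ^ (-(4 : ℝ) / 3))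
    (hpos : ∀ᶠ t in atTop, ‖γ t‖ ≤ C * t ^ ((2 : ℝ) / 3)) :
    Tendsto (deriv γ) atTop (nhds 0) := by
  have hderivs : ∀ᶠ t in atTop,
      HasDerivAt γ (deriv γ t) t ∧ HasDerivAt (deriv γ) (deriv (deriv γ) t) t :=
    (eventually_gt_atTop T₀).mono fun t ht =>
      (hC2.mono Ioi_subset_Ici_self).hasDerivAt_deriv_and_deriv_deriv isOpen_Ioi ht
  refine tendsto_deriv_zero_of_norm_le_rpow (p := 2 / 3) (by norm_num)
    (hderivs.mono fun _ h => h.1) (hderivs.mono fun _ h => h.2) hpos ?_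
  convert hacc using 5
  norm_num

/-- If a C² curve `γ : [T₀,∞) → ℝⁿ` satisfies `‖γ''(t)‖ = O(t^(-4/3))` and
`‖γ(t)‖ = O(t^(2/3))` as `t → ∞`, then `γ'(t) → 0`. -/
theorem velocity_tendsto_zero
    (n : ℕ) (γ : ℝ → EuclideanSpace ℝ (Fin n)) (T₀ : ℝ) (hT₀ : 0 < T₀)
    (hC2 : ContDiffOn ℝ 2 γ (Set.Ici T₀))
    (C : ℝ)
    (hacc : ∀ᶠ t in atTop, ‖deriv (deriv γ) t‖ ≤ C * t ^ (-(4 : ℝ) / 3))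
    (hpos : ∀ᶠ t in atTop, ‖γ t‖ ≤ C * t ^ ((2 : ℝ) / 3)) :
    Tendsto (deriv γ) atTop (nhds 0) :=
  velocity_tendsto_zero_general n γ T₀ hC2 C hacc hpos
end

section
/- For the one-dimensional Kepler problem ṙ'' = -U₀/r² with U₀ > 0, given 0 ≤ a < b and energy h ≥ 0, there is exactly one solution arc of energy h joining a to b, and it is increasing; for -U₀/b < h < 0 there are exactly two solution arcs of energy h joining a to b: one increasing from a to b, and one increasing from a to -U₀/h then decreasing to b. -/
open Set

/-- `IsKeplerArc U₀ h a b τ r` : `r` is a solution arc of the one-dimensional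
Kepler problem `r'' = -U₀/r²` of energy `h`, joining `a` to `b` in time `τ > 0`,
positive in the interior. -/
def IsKeplerArc (U₀ h a b τ : ℝ) (r : ℝ → ℝ) : Prop :=
  0 < τ ∧ r 0 = a ∧ r τ = b ∧ ContinuousOn r (Icc 0 τ) ∧
    ∀ t ∈ Ioo 0 τ, 0 < r t ∧
      deriv (deriv r) t = -U₀ / (r t) ^ 2 ∧
      (deriv r t) ^ 2 / 2 - U₀ / r t = h

/-!
Energy conservation gives `ṙ = ±√(2h + 2U₀/r)`, and `r̈ < 0` makes `ṙ` strictly decreasing,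
so an arc from `a` to `b > a` either moves outward all the time or turns around exactly once,
at the radius `-U₀/h` where `ṙ = 0`; the latter needs `h < 0`. On each monotone piece the
elapsed time is `±T(r) + const`, where `T(ρ) = ∫_a^ρ ds / √(2h + 2U₀/s)`, and since `T` is
strictly increasing this determines the arc. Conversely, the inverse function of `T` is an
outward arc whenever `h > -U₀/b`, and for `h < 0` the arc through `-U₀/h` is the radial Kepler
orbit `r = p (1 - cos E)`, `t = q (E - sin E)` with `p = -U₀/(2h)` and `q² U₀ = p³`, between
the eccentric anomalies `E₁ < π < E₂` at which `r = a` and `r = b`.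
-/

open Function Filter Topology MeasureTheory

noncomputable section

lemma eq_add_mul_sub_of_hasDerivAt {f : ℝ → ℝ} {c x y : ℝ} (hf : ContinuousOn f (Icc x y))
    (hd : ∀ t ∈ Ioo x y, HasDerivAt f c t) : ∀ t ∈ Icc x y, f t = f x + c * (t - x) := by
  rintro t ⟨hxt, hty⟩
  rcases hxt.eq_or_lt with rfl | hxt
  · ring
  obtain ⟨s, -, hs⟩ := exists_hasDerivAt_eq_slope f (fun _ ↦ c) hxt
    (hf.mono (Icc_subset_Icc le_rfl hty)) fun s hs ↦ hd s ⟨hs.1, hs.2.trans_le hty⟩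
  rw [hs, div_mul_cancel₀ _ (sub_pos.2 hxt).ne']
  ring

lemma StrictMonoOn.continuousOn_of_surjOn_Icc {f : ℝ → ℝ} {x y : ℝ}
    (hf : StrictMonoOn f (Icc x y)) (hsurj : SurjOn f (Icc x y) (Icc (f x) (f y))) :
    ContinuousOn f (Icc x y) := by
  intro z hz
  have hright : ContinuousWithinAt f (Icc x y ∩ Ici z) z := by
    rcases hz.2.eq_or_lt with rfl | hzy
    · exact continuousWithinAt_singleton.mono fun w hw ↦ le_antisymm hw.1.2 hw.2
    refine (continuousWithinAt_right_of_monotoneOn_of_image_mem_nhdsWithin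
      (hf.monotoneOn.mono (Icc_subset_Icc hz.1 le_rfl)) (Icc_mem_nhdsGE hzy) ?_).mono
      inter_subset_right
    refine mem_of_superset (Icc_mem_nhdsGE (hf hz (right_mem_Icc.2 (hz.1.trans hz.2)) hzy))
      fun w hw ↦ ?_
    obtain ⟨c, hc, rfl⟩ := hsurj ⟨(hf.monotoneOn (left_mem_Icc.2 (hz.1.trans hz.2)) hz hz.1).trans
      hw.1, hw.2⟩
    exact ⟨c, ⟨(hf.le_iff_le hz hc).1 hw.1, hc.2⟩, rfl⟩
  have hleft : ContinuousWithinAt f (Icc x y ∩ Iic z) z := by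
    rcases hz.1.eq_or_lt with rfl | hxz
    · exact continuousWithinAt_singleton.mono fun w hw ↦ le_antisymm hw.2 hw.1.1
    refine (continuousWithinAt_left_of_monotoneOn_of_image_mem_nhdsWithin
      (hf.monotoneOn.mono (Icc_subset_Icc le_rfl hz.2)) (Icc_mem_nhdsLE hxz) ?_).mono
      inter_subset_right
    refine mem_of_superset (Icc_mem_nhdsLE (hf (left_mem_Icc.2 (hz.1.trans hz.2)) hz hxz))
      fun w hw ↦ ?_
    obtain ⟨c, hc, rfl⟩ := hsurj ⟨hw.1, hw.2.trans
      (hf.monotoneOn hz (right_mem_Icc.2 (hz.1.trans hz.2)) hz.2)⟩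
    exact ⟨c, ⟨hc.1, (hf.le_iff_le hc hz).1 hw.2⟩, rfl⟩
  exact (hleft.union hright).mono fun w hw ↦ (le_total w z).imp (⟨hw, ·⟩) (⟨hw, ·⟩)

section invFunOn
variable {f : ℝ → ℝ} {x y : ℝ}

lemma StrictMonoOn.strictMonoOn_invFunOn_Icc (hxy : x ≤ y) (hf : ContinuousOn f (Icc x y))
    (hmono : StrictMonoOn f (Icc x y)) :
    StrictMonoOn (invFunOn f (Icc x y)) (Icc (f x) (f y)) := by
  have hsurj := hf.surjOn_Icc (left_mem_Icc.2 hxy) (right_mem_Icc.2 hxy)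
  intro s hs t ht hst
  rwa [← hmono.lt_iff_lt (hsurj.mapsTo_invFunOn hs) (hsurj.mapsTo_invFunOn ht),
    hsurj.rightInvOn_invFunOn hs, hsurj.rightInvOn_invFunOn ht]

lemma StrictMonoOn.continuousOn_invFunOn_Icc (hxy : x ≤ y) (hf : ContinuousOn f (Icc x y))
    (hmono : StrictMonoOn f (Icc x y)) :
    ContinuousOn (invFunOn f (Icc x y)) (Icc (f x) (f y)) := by
  refine (hmono.strictMonoOn_invFunOn_Icc hxy hf).continuousOn_of_surjOn_Icc ?_
  rw [hmono.injOn.leftInvOn_invFunOn (left_mem_Icc.2 hxy),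
    hmono.injOn.leftInvOn_invFunOn (right_mem_Icc.2 hxy)]
  exact fun ρ hρ ↦ ⟨f ρ, hmono.monotoneOn.mapsTo_Icc hρ, hmono.injOn.leftInvOn_invFunOn hρ⟩

lemma StrictMonoOn.hasDerivAt_invFunOn_Icc (hxy : x ≤ y) (hf : ContinuousOn f (Icc x y))
    (hmono : StrictMonoOn f (Icc x y)) {t d : ℝ} (ht : t ∈ Ioo (f x) (f y))
    (hd : HasDerivAt f d (invFunOn f (Icc x y) t)) (hd0 : d ≠ 0) :
    HasDerivAt (invFunOn f (Icc x y)) d⁻¹ t := by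
  have hsurj := hf.surjOn_Icc (left_mem_Icc.2 hxy) (right_mem_Icc.2 hxy)
  refine hd.of_local_left_inverse ((hmono.continuousOn_invFunOn_Icc hxy hf).continuousAt
    (Icc_mem_nhds ht.1 ht.2)) hd0 ?_
  filter_upwards [Icc_mem_nhds ht.1 ht.2] with s hs using hsurj.rightInvOn_invFunOn hs

lemma StrictMonoOn.mapsTo_invFunOn_Ioo (hxy : x ≤ y) (hf : ContinuousOn f (Icc x y))
    (hmono : StrictMonoOn f (Icc x y)) :
    MapsTo (invFunOn f (Icc x y)) (Ioo (f x) (f y)) (Ioo x y) := by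
  intro t ht
  have := (hmono.strictMonoOn_invFunOn_Icc hxy hf).mapsTo_Ioo ht
  rwa [hmono.injOn.leftInvOn_invFunOn (left_mem_Icc.2 hxy),
    hmono.injOn.leftInvOn_invFunOn (right_mem_Icc.2 hxy)] at this

end invFunOn

namespace Kepler

variable {U₀ h a c : ℝ}

def speed (U₀ h ρ : ℝ) : ℝ := √(2 * h + 2 * U₀ / ρ)

/-- `(speed U₀ h s)⁻¹`, written so as to stay continuous at `s = 0`. -/
def invSpeed (U₀ h s : ℝ) : ℝ := √(s / (2 * U₀ + 2 * h * s))

def travelTime (U₀ h a ρ : ℝ) : ℝ := ∫ s in a..ρ, invSpeed U₀ h s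

def IsTurningTime (r : ℝ → ℝ) (τ t₀ : ℝ) : Prop :=
  t₀ ∈ Ioo 0 τ ∧ deriv r t₀ = 0 ∧ (∀ t ∈ Ioo 0 t₀, 0 < deriv r t) ∧ ∀ t ∈ Ioo t₀ τ, deriv r t < 0

lemma speed_sq_arg_pos {ρ : ℝ} (hρ : 0 < ρ) (hd : 0 < 2 * U₀ + 2 * h * ρ) :
    0 < 2 * h + 2 * U₀ / ρ := by
  rw [show 2 * h + 2 * U₀ / ρ = (2 * U₀ + 2 * h * ρ) / ρ by field_simp; ring]
  positivity

lemma speed_sq {ρ : ℝ} (hρ : 0 < ρ) (hd : 0 < 2 * U₀ + 2 * h * ρ) :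
    speed U₀ h ρ ^ 2 = 2 * h + 2 * U₀ / ρ :=
  Real.sq_sqrt (speed_sq_arg_pos hρ hd).le

lemma speed_pos {ρ : ℝ} (hρ : 0 < ρ) (hd : 0 < 2 * U₀ + 2 * h * ρ) : 0 < speed U₀ h ρ :=
  Real.sqrt_pos.2 (speed_sq_arg_pos hρ hd)

lemma invSpeed_pos {s : ℝ} (hs : 0 < s) (hd : 0 < 2 * U₀ + 2 * h * s) : 0 < invSpeed U₀ h s :=
  Real.sqrt_pos.2 (div_pos hs hd)

lemma invSpeed_mul_speed {ρ : ℝ} (hρ : 0 < ρ) (hd : 0 < 2 * U₀ + 2 * h * ρ) :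
    invSpeed U₀ h ρ * speed U₀ h ρ = 1 := by
  rw [invSpeed, speed, ← Real.sqrt_mul (div_pos hρ hd).le, ← Real.sqrt_one]
  congr 1
  rw [div_mul_eq_mul_div, div_eq_one_iff_eq hd.ne']
  field_simp
  ring

lemma continuousAt_invSpeed {s : ℝ} (hd : 2 * U₀ + 2 * h * s ≠ 0) :
    ContinuousAt (invSpeed U₀ h) s :=
  (continuousAt_id.div (continuousAt_const.add (continuousAt_const.mul continuousAt_id)) hd).sqrt

lemma measurable_invSpeed : Measurable (invSpeed U₀ h) := by
  unfold invSpeed; fun_prop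

lemma integrableOn_invSpeed (hc : ∀ s ∈ Icc a c, 0 < 2 * U₀ + 2 * h * s) :
    IntegrableOn (invSpeed U₀ h) (Icc a c) :=
  ContinuousOn.integrableOn_Icc fun s hs ↦ (continuousAt_invSpeed (hc s hs).ne').continuousWithinAt

lemma invSpeed_eq_mul_rpow (hh : h < 0) {s : ℝ} (hs : s ≤ -U₀ / h) :
    invSpeed U₀ h s = √(s / (-2 * h)) * (-U₀ / h - s) ^ (-(1 / 2) : ℝ) := by
  have hden : 2 * U₀ + 2 * h * s = -2 * h * (-U₀ / h - s) := by have := hh.ne; field_simp; ring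
  rw [invSpeed, hden, div_mul_eq_div_div, div_eq_mul_inv _ (-U₀ / h - s),
    Real.sqrt_mul' _ (inv_nonneg.2 (sub_nonneg.2 hs)), Real.sqrt_inv,
    Real.sqrt_eq_rpow (-U₀ / h - s),
    ← Real.rpow_neg (sub_nonneg.2 hs)]

/-- Near the turning radius `-U₀/h` the integrand blows up like `(-U₀/h - s)^(-1/2)`. -/
lemma integrableOn_invSpeed_turning (hh : h < 0) (a : ℝ) :
    IntegrableOn (invSpeed U₀ h) (Icc a (-U₀ / h)) := by
  set m := -U₀ / h
  rcases lt_or_ge m a with hma | ham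
  · simp [Icc_eq_empty_of_lt hma]
  have hmajor :
      IntervalIntegrable (fun s ↦ √(m / (-2 * h)) * (m - s) ^ (-(1 / 2) : ℝ)) volume a m := by
    have := ((intervalIntegral.intervalIntegrable_rpow' (a := m - a) (b := m - m)
      (r := -(1 / 2)) (by norm_num)).comp_sub_left m).const_mul √(m / (-2 * h))
    simpa using this
  rw [← intervalIntegrable_iff_integrableOn_Icc_of_le ham]
  refine hmajor.mono_fun measurable_invSpeed.aestronglyMeasurable ?_
  rw [uIoc_of_le ham]
  refine (ae_restrict_iff' measurableSet_Ioc).2 (Eventually.of_forall fun s hs ↦ ?_)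
  have hrpow : 0 ≤ (m - s) ^ (-(1 / 2) : ℝ) := Real.rpow_nonneg (sub_nonneg.2 hs.2) _
  dsimp only
  rw [invSpeed_eq_mul_rpow hh hs.2, Real.norm_of_nonneg (by positivity),
    Real.norm_of_nonneg (by positivity)]
  gcongr
  · linarith
  · exact hs.2

@[simp]
lemma travelTime_self : travelTime U₀ h a a = 0 := intervalIntegral.integral_same

lemma hasDerivAt_travelTime (hint : IntegrableOn (invSpeed U₀ h) (Icc a c)) {ρ : ℝ}
    (hρ : ρ ∈ Ioo a c) (hd : 2 * U₀ + 2 * h * ρ ≠ 0) :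
    HasDerivAt (travelTime U₀ h a) (invSpeed U₀ h ρ) ρ :=
  intervalIntegral.integral_hasDerivAt_right
    ((intervalIntegrable_iff_integrableOn_Icc_of_le hρ.1.le).2
      (hint.mono_set (Icc_subset_Icc le_rfl hρ.2.le)))
    (measurable_invSpeed.stronglyMeasurable.stronglyMeasurableAtFilter) (continuousAt_invSpeed hd)

lemma continuousOn_travelTime (hint : IntegrableOn (invSpeed U₀ h) (Icc a c)) :
    ContinuousOn (travelTime U₀ h a) (Icc a c) := by
  rcases le_or_gt a c with hac | hca
  · have := intervalIntegral.continuousOn_primitive_interval (μ := volume)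
      (by rwa [uIcc_of_le hac] : IntegrableOn (invSpeed U₀ h) (uIcc a c))
    rwa [uIcc_of_le hac] at this
  · simp [Icc_eq_empty_of_lt hca]

lemma strictMonoOn_travelTime (ha : 0 ≤ a) (hint : IntegrableOn (invSpeed U₀ h) (Icc a c))
    (hden : ∀ s ∈ Ioo a c, 0 < 2 * U₀ + 2 * h * s) :
    StrictMonoOn (travelTime U₀ h a) (Icc a c) := by
  refine strictMonoOn_of_deriv_pos (convex_Icc a c) (continuousOn_travelTime hint) ?_
  rw [interior_Icc]
  intro ρ hρ
  rw [(hasDerivAt_travelTime hint hρ (hden ρ hρ).ne').deriv]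
  exact invSpeed_pos (ha.trans_lt hρ.1) (hden ρ hρ)

lemma travelTime_comp_eq {r : ℝ → ℝ} {ε t₁ t₂ : ℝ} (ha : 0 ≤ a)
    (hint : IntegrableOn (invSpeed U₀ h) (Icc a c)) (hden : ∀ s ∈ Ioo a c, 0 < 2 * U₀ + 2 * h * s)
    (hrc : ContinuousOn r (Icc t₁ t₂)) (hmaps : MapsTo r (Icc t₁ t₂) (Icc a c))
    (hmaps' : MapsTo r (Ioo t₁ t₂) (Ioo a c))
    (hd : ∀ t ∈ Ioo t₁ t₂, HasDerivAt r (ε * speed U₀ h (r t)) t) :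
    ∀ t ∈ Icc t₁ t₂, travelTime U₀ h a (r t) = travelTime U₀ h a (r t₁) + ε * (t - t₁) := by
  refine eq_add_mul_sub_of_hasDerivAt ((continuousOn_travelTime hint).comp hrc hmaps)
    fun t ht ↦ ?_
  have hρ := hmaps' ht
  have := (hasDerivAt_travelTime hint hρ (hden _ hρ).ne').comp t (hd t ht)
  rwa [mul_left_comm, invSpeed_mul_speed (ha.trans_lt hρ.1) (hden _ hρ), mul_one] at this

lemma den_pos_of_mem_Icc (hU₀ : 0 < U₀) {b : ℝ} (ha : 0 ≤ a) (hab : a < b)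
    (hh : -U₀ / b < h) : ∀ s ∈ Icc a b, 0 < 2 * U₀ + 2 * h * s := by
  intro s hs
  have hhb : -U₀ < h * b := by rwa [div_lt_iff₀ (ha.trans_lt hab)] at hh
  rcases le_or_gt 0 h with h0 | h0
  · nlinarith [ha.trans hs.1]
  · nlinarith [mul_le_mul_of_nonpos_left hs.2 h0.le]

lemma strictMonoOn_travelTime_Icc (hU₀ : 0 < U₀) {b : ℝ} (ha : 0 ≤ a) (hab : a < b)
    (hh : -U₀ / b < h) : StrictMonoOn (travelTime U₀ h a) (Icc a b) :=
  have hden := den_pos_of_mem_Icc hU₀ ha hab hh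
  strictMonoOn_travelTime ha (integrableOn_invSpeed hden) fun s hs ↦ hden s (Ioo_subset_Icc_self hs)

lemma den_pos_of_lt_turning (hh : h < 0) {s : ℝ} (hs : s < -U₀ / h) :
    0 < 2 * U₀ + 2 * h * s := by
  have := mul_lt_mul_of_neg_left hs hh
  rw [mul_div_cancel₀ _ hh.ne] at this
  linarith

lemma strictMonoOn_travelTime_turning (hh : h < 0) (ha : 0 ≤ a) :
    StrictMonoOn (travelTime U₀ h a) (Icc a (-U₀ / h)) :=
  strictMonoOn_travelTime ha (integrableOn_invSpeed_turning hh a) fun _ hs ↦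
    den_pos_of_lt_turning hh hs.2

end Kepler

namespace IsKeplerArc
open Kepler
variable {U₀ h a b c τ : ℝ} {r : ℝ → ℝ}

lemma deriv_sq (hr : IsKeplerArc U₀ h a b τ r) {t : ℝ} (ht : t ∈ Ioo 0 τ) :
    deriv r t ^ 2 = 2 * h + 2 * U₀ / r t := by
  linarith [(hr.2.2.2.2 t ht).2.2, mul_div_assoc 2 U₀ (r t)]

lemma deriv_eq_speed (hr : IsKeplerArc U₀ h a b τ r) {t : ℝ} (ht : t ∈ Ioo 0 τ)
    (hpos : 0 < deriv r t) : deriv r t = speed U₀ h (r t) := by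
  rw [speed, ← hr.deriv_sq ht, Real.sqrt_sq hpos.le]

lemma deriv_eq_neg_speed (hr : IsKeplerArc U₀ h a b τ r) {t : ℝ} (ht : t ∈ Ioo 0 τ)
    (hneg : deriv r t < 0) : deriv r t = -speed U₀ h (r t) := by
  rw [speed, ← hr.deriv_sq ht, Real.sqrt_sq_eq_abs, abs_of_neg hneg, neg_neg]

lemma deriv_deriv_neg (hU₀ : 0 < U₀) (hr : IsKeplerArc U₀ h a b τ r) {t : ℝ}
    (ht : t ∈ Ioo 0 τ) : deriv (deriv r) t < 0 := by
  rw [(hr.2.2.2.2 t ht).2.1]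
  exact div_neg_of_neg_of_pos (neg_neg_of_pos hU₀) (pow_pos (hr.2.2.2.2 t ht).1 2)

lemma continuousOn_deriv (hU₀ : 0 < U₀) (hr : IsKeplerArc U₀ h a b τ r) :
    ContinuousOn (deriv r) (Ioo 0 τ) := fun _ ht ↦
  (differentiableAt_of_deriv_ne_zero (hr.deriv_deriv_neg hU₀ ht).ne).continuousAt.continuousWithinAt

lemma strictAntiOn_deriv (hU₀ : 0 < U₀) (hr : IsKeplerArc U₀ h a b τ r) :
    StrictAntiOn (deriv r) (Ioo 0 τ) :=
  strictAntiOn_of_deriv_neg (convex_Ioo 0 τ) (hr.continuousOn_deriv hU₀)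
    (by rw [interior_Ioo]; exact fun t ht ↦ hr.deriv_deriv_neg hU₀ ht)

lemma strictMonoOn_of_deriv_pos (hr : IsKeplerArc U₀ h a b τ r)
    (hpos : ∀ t ∈ Ioo 0 τ, 0 < deriv r t) : StrictMonoOn r (Icc 0 τ) :=
  _root_.strictMonoOn_of_deriv_pos (convex_Icc 0 τ) hr.2.2.2.1 (by rwa [interior_Icc])

lemma strictMonoOn_of_isTurningTime (hr : IsKeplerArc U₀ h a b τ r) {t₀ : ℝ}
    (ht₀ : IsTurningTime r τ t₀) : StrictMonoOn r (Icc 0 t₀) :=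
  _root_.strictMonoOn_of_deriv_pos (convex_Icc 0 t₀)
    (hr.2.2.2.1.mono (Icc_subset_Icc le_rfl ht₀.1.2.le)) (by rw [interior_Icc]; exact ht₀.2.2.1)

lemma strictAntiOn_of_isTurningTime (hr : IsKeplerArc U₀ h a b τ r) {t₀ : ℝ}
    (ht₀ : IsTurningTime r τ t₀) : StrictAntiOn r (Icc t₀ τ) :=
  strictAntiOn_of_deriv_neg (convex_Icc t₀ τ)
    (hr.2.2.2.1.mono (Icc_subset_Icc ht₀.1.1.le le_rfl)) (by rw [interior_Icc]; exact ht₀.2.2.2)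

/-- `r'` is strictly decreasing because `r'' < 0`, so it changes sign at most once. -/
lemma deriv_pos_or_turning (hU₀ : 0 < U₀) (hab : a < b) (hr : IsKeplerArc U₀ h a b τ r) :
    (∀ t ∈ Ioo 0 τ, 0 < deriv r t) ∨ ∃ t₀, IsTurningTime r τ t₀ := by
  have hanti := hr.strictAntiOn_deriv hU₀
  have hcont := hr.continuousOn_deriv hU₀
  obtain ⟨s₁, hs₁, hpos⟩ : ∃ s ∈ Ioo 0 τ, 0 < deriv r s := by
    by_contra! hle
    have hneg : ∀ t ∈ Ioo 0 τ, deriv r t < 0 := fun t ht ↦ (hle t ht).lt_of_ne fun h0 ↦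
      (hle (t / 2) ⟨by linarith [ht.1], by linarith [ht.1, ht.2]⟩).not_gt
        (h0 ▸ hanti ⟨by linarith [ht.1], by linarith [ht.1, ht.2]⟩ ht (by linarith [ht.1]))
    have := strictAntiOn_of_deriv_neg (convex_Icc 0 τ) hr.2.2.2.1 (by rwa [interior_Icc])
      (left_mem_Icc.2 hr.1.le) (right_mem_Icc.2 hr.1.le) hr.1
    rw [hr.2.1, hr.2.2.1] at this
    exact hab.not_gt this
  refine or_iff_not_imp_left.2 fun hnot ↦ ?_
  push Not at hnot
  obtain ⟨s₂, hs₂, hle⟩ := hnot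
  have hs : s₁ < s₂ := lt_of_not_ge fun h ↦ (hanti.antitoneOn hs₂ hs₁ h).not_gt (hle.trans_lt hpos)
  have hsub : Icc s₁ s₂ ⊆ Ioo 0 τ := Icc_subset_Ioo hs₁.1 hs₂.2
  obtain ⟨t₀, ht₀, hzero⟩ := intermediate_value_Icc' hs.le (hcont.mono hsub) ⟨hle, hpos.le⟩
  have ht₀' := hsub ht₀
  refine ⟨t₀, ht₀', hzero, fun t ht ↦ ?_, fun t ht ↦ ?_⟩
  · exact hzero ▸ hanti ⟨ht.1, ht.2.trans ht₀'.2⟩ ht₀' ht.2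
  · exact hzero ▸ hanti ht₀' ⟨ht₀'.1.trans ht.1, ht.2⟩ ht.1

lemma turning_radius (hU₀ : 0 < U₀) (hr : IsKeplerArc U₀ h a b τ r) {t₀ : ℝ}
    (ht₀ : IsTurningTime r τ t₀) : h < 0 ∧ r t₀ = -U₀ / h := by
  obtain ⟨hpos, -, hen⟩ := hr.2.2.2.2 t₀ ht₀.1
  rw [ht₀.2.1] at hen
  have hh : h = -U₀ / r t₀ := by linarith [neg_div (r t₀) U₀]
  refine ⟨hh ▸ div_neg_of_neg_of_pos (neg_neg_of_pos hU₀) hpos, ?_⟩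
  rw [hh]
  field_simp

lemma travelTime_add_of_deriv_pos (ha : 0 ≤ a) (hint : IntegrableOn (invSpeed U₀ h) (Icc a c))
    (hden : ∀ s ∈ Ioo a c, 0 < 2 * U₀ + 2 * h * s) (hr : IsKeplerArc U₀ h a b τ r) {t₁ t₂ : ℝ}
    (ht₁ : 0 ≤ t₁) (ht₂ : t₂ ≤ τ) (hpos : ∀ t ∈ Ioo t₁ t₂, 0 < deriv r t) (hlo : a ≤ r t₁)
    (hhi : r t₂ ≤ c) :
    ∀ t ∈ Icc t₁ t₂, r t ∈ Icc a c ∧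
      travelTime U₀ h a (r t) = travelTime U₀ h a (r t₁) + (t - t₁) := by
  have hsub' : Ioo t₁ t₂ ⊆ Ioo 0 τ := Ioo_subset_Ioo ht₁ ht₂
  have hrc := hr.2.2.2.1.mono (Icc_subset_Icc ht₁ ht₂)
  have hmono : StrictMonoOn r (Icc t₁ t₂) :=
    _root_.strictMonoOn_of_deriv_pos (convex_Icc _ _) hrc (by rwa [interior_Icc])
  have hmaps : MapsTo r (Icc t₁ t₂) (Icc a c) := fun t ht ↦
    Icc_subset_Icc hlo hhi (hmono.monotoneOn.mapsTo_Icc ht)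
  have hmaps' : MapsTo r (Ioo t₁ t₂) (Ioo a c) := fun t ht ↦
    Ioo_subset_Ioo hlo hhi (hmono.mapsTo_Ioo ht)
  have hd : ∀ t ∈ Ioo t₁ t₂, HasDerivAt r (1 * speed U₀ h (r t)) t := fun t ht ↦ by
    rw [one_mul, ← hr.deriv_eq_speed (hsub' ht) (hpos t ht)]
    exact (differentiableAt_of_deriv_ne_zero (hpos t ht).ne').hasDerivAt
  intro t ht
  simpa using And.intro (hmaps ht) (travelTime_comp_eq ha hint hden hrc hmaps hmaps' hd t ht)

lemma travelTime_sub_of_deriv_neg (ha : 0 ≤ a) (hint : IntegrableOn (invSpeed U₀ h) (Icc a c))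
    (hden : ∀ s ∈ Ioo a c, 0 < 2 * U₀ + 2 * h * s) (hr : IsKeplerArc U₀ h a b τ r) {t₁ t₂ : ℝ}
    (ht₁ : 0 ≤ t₁) (ht₂ : t₂ ≤ τ) (hneg : ∀ t ∈ Ioo t₁ t₂, deriv r t < 0) (hlo : a ≤ r t₂)
    (hhi : r t₁ ≤ c) :
    ∀ t ∈ Icc t₁ t₂, r t ∈ Icc a c ∧
      travelTime U₀ h a (r t) = travelTime U₀ h a (r t₁) - (t - t₁) := by
  have hsub' : Ioo t₁ t₂ ⊆ Ioo 0 τ := Ioo_subset_Ioo ht₁ ht₂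
  have hrc := hr.2.2.2.1.mono (Icc_subset_Icc ht₁ ht₂)
  have hanti : StrictAntiOn r (Icc t₁ t₂) :=
    strictAntiOn_of_deriv_neg (convex_Icc _ _) hrc (by rwa [interior_Icc])
  have hmaps : MapsTo r (Icc t₁ t₂) (Icc a c) := fun t ht ↦
    Icc_subset_Icc hlo hhi (hanti.antitoneOn.mapsTo_Icc ht)
  have hmaps' : MapsTo r (Ioo t₁ t₂) (Ioo a c) := fun t ht ↦
    Ioo_subset_Ioo hlo hhi (hanti.mapsTo_Ioo ht)
  have hd : ∀ t ∈ Ioo t₁ t₂, HasDerivAt r (-1 * speed U₀ h (r t)) t := fun t ht ↦ by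
    rw [neg_one_mul, ← hr.deriv_eq_neg_speed (hsub' ht) (hneg t ht)]
    exact (differentiableAt_of_deriv_ne_zero (hneg t ht).ne).hasDerivAt
  intro t ht
  refine ⟨hmaps ht, ?_⟩
  rw [travelTime_comp_eq ha hint hden hrc hmaps hmaps' hd t ht]
  ring

lemma travelTime_eq_of_deriv_pos (hU₀ : 0 < U₀) (ha : 0 ≤ a) (hab : a < b) (hh : -U₀ / b < h)
    (hr : IsKeplerArc U₀ h a b τ r) (hpos : ∀ t ∈ Ioo 0 τ, 0 < deriv r t) :
    ∀ t ∈ Icc 0 τ, r t ∈ Icc a b ∧ travelTime U₀ h a (r t) = t := by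
  have hden := den_pos_of_mem_Icc hU₀ ha hab hh
  intro t ht
  have := hr.travelTime_add_of_deriv_pos ha (integrableOn_invSpeed hden)
    (fun s hs ↦ hden s (Ioo_subset_Icc_self hs)) le_rfl le_rfl hpos hr.2.1.ge hr.2.2.1.le t ht
  rwa [hr.2.1, travelTime_self, zero_add, sub_zero] at this

lemma eqOn_of_deriv_pos (hU₀ : 0 < U₀) (ha : 0 ≤ a) (hab : a < b) (hh : -U₀ / b < h)
    {τ₁ τ₂ : ℝ} {r₁ r₂ : ℝ → ℝ} (hr₁ : IsKeplerArc U₀ h a b τ₁ r₁)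
    (hr₂ : IsKeplerArc U₀ h a b τ₂ r₂) (hpos₁ : ∀ t ∈ Ioo 0 τ₁, 0 < deriv r₁ t)
    (hpos₂ : ∀ t ∈ Ioo 0 τ₂, 0 < deriv r₂ t) : τ₁ = τ₂ ∧ EqOn r₁ r₂ (Icc 0 τ₁) := by
  have hT₁ := hr₁.travelTime_eq_of_deriv_pos hU₀ ha hab hh hpos₁
  have hT₂ := hr₂.travelTime_eq_of_deriv_pos hU₀ ha hab hh hpos₂
  have hτ : τ₁ = τ₂ := by
    rw [← (hT₁ τ₁ (right_mem_Icc.2 hr₁.1.le)).2, ← (hT₂ τ₂ (right_mem_Icc.2 hr₂.1.le)).2,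
      hr₁.2.2.1, hr₂.2.2.1]
  refine ⟨hτ, fun t ht ↦ ?_⟩
  have h₁ := hT₁ t ht
  have h₂ := hT₂ t (hτ ▸ ht)
  exact (strictMonoOn_travelTime_Icc hU₀ ha hab hh).injOn h₁.1 h₂.1 (h₁.2.trans h₂.2.symm)

lemma travelTime_eq_of_turning (hU₀ : 0 < U₀) (ha : 0 ≤ a) (hab : a < b)
    (hr : IsKeplerArc U₀ h a b τ r) {t₀ : ℝ} (ht₀ : IsTurningTime r τ t₀) :
    travelTime U₀ h a (-U₀ / h) = t₀ ∧
      (∀ t ∈ Icc 0 t₀, r t ∈ Icc a (-U₀ / h) ∧ travelTime U₀ h a (r t) = t) ∧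
      ∀ t ∈ Icc t₀ τ, r t ∈ Icc a (-U₀ / h) ∧ travelTime U₀ h a (r t) = 2 * t₀ - t := by
  obtain ⟨hh, hrt₀⟩ := hr.turning_radius hU₀ ht₀
  obtain ⟨ht₀, -, hpos, hneg⟩ := ht₀
  have hint := integrableOn_invSpeed_turning (U₀ := U₀) hh a
  have hden : ∀ s ∈ Ioo a (-U₀ / h), 0 < 2 * U₀ + 2 * h * s := fun _ hs ↦
    den_pos_of_lt_turning hh hs.2
  have hout := hr.travelTime_add_of_deriv_pos ha hint hden le_rfl ht₀.2.le hpos hr.2.1.ge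
    hrt₀.le
  simp only [hr.2.1, travelTime_self, zero_add, sub_zero] at hout
  have hTm : travelTime U₀ h a (-U₀ / h) = t₀ := by
    simpa [hrt₀] using (hout t₀ (right_mem_Icc.2 ht₀.1.le)).2
  have hin := hr.travelTime_sub_of_deriv_neg ha hint hden ht₀.1.le le_rfl hneg
    (hr.2.2.1 ▸ hab.le) hrt₀.le
  refine ⟨hTm, hout, fun t ht ↦ ⟨(hin t ht).1, ?_⟩⟩
  rw [(hin t ht).2, hrt₀, hTm]
  ring

lemma eqOn_of_turning (hU₀ : 0 < U₀) (ha : 0 ≤ a) (hab : a < b) {τ₁ τ₂ t₁ t₂ : ℝ}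
    {r₁ r₂ : ℝ → ℝ} (hr₁ : IsKeplerArc U₀ h a b τ₁ r₁) (hr₂ : IsKeplerArc U₀ h a b τ₂ r₂)
    (ht₁ : IsTurningTime r₁ τ₁ t₁) (ht₂ : IsTurningTime r₂ τ₂ t₂) :
    τ₁ = τ₂ ∧ EqOn r₁ r₂ (Icc 0 τ₁) := by
  have hh := (hr₁.turning_radius hU₀ ht₁).1
  have hinj := (strictMonoOn_travelTime_turning (U₀ := U₀) hh ha).injOn
  obtain ⟨hT₁, hout₁, hin₁⟩ := hr₁.travelTime_eq_of_turning hU₀ ha hab ht₁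
  obtain ⟨hT₂, hout₂, hin₂⟩ := hr₂.travelTime_eq_of_turning hU₀ ha hab ht₂
  have htt : t₁ = t₂ := hT₁.symm.trans hT₂
  subst htt
  have hτ : τ₁ = τ₂ := by
    have e₁ := (hin₁ τ₁ (right_mem_Icc.2 ht₁.1.2.le)).2
    have e₂ := (hin₂ τ₂ (right_mem_Icc.2 ht₂.1.2.le)).2
    rw [hr₁.2.2.1] at e₁
    rw [hr₂.2.2.1] at e₂
    linarith
  subst hτ
  refine ⟨rfl, fun t ht ↦ ?_⟩
  rcases le_total t t₁ with hle | hge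
  · have e₁ := hout₁ t ⟨ht.1, hle⟩
    have e₂ := hout₂ t ⟨ht.1, hle⟩
    exact hinj e₁.1 e₂.1 (e₁.2.trans e₂.2.symm)
  · have e₁ := hin₁ t ⟨hge, ht.2⟩
    have e₂ := hin₂ t ⟨hge, ht.2⟩
    exact hinj e₁.1 e₂.1 (e₁.2.trans e₂.2.symm)

end IsKeplerArc

namespace Kepler
variable {U₀ h : ℝ}

lemma hasDerivAt_speed {ρ : ℝ} (hρ : 0 < ρ) (hd : 0 < 2 * U₀ + 2 * h * ρ) :
    HasDerivAt (speed U₀ h) (-U₀ / (ρ ^ 2 * speed U₀ h ρ)) ρ := by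
  have hinner : HasDerivAt (fun ρ ↦ 2 * h + 2 * U₀ / ρ) (-(2 * U₀ * (ρ ^ 2)⁻¹)) ρ := by
    simpa [div_eq_mul_inv] using ((hasDerivAt_inv hρ.ne').const_mul (2 * U₀)).const_add (2 * h)
  convert hinner.sqrt (speed_sq_arg_pos hρ hd).ne' using 1
  · rfl
  change _ = _ / (2 * speed U₀ h ρ)
  field_simp [(speed_pos hρ hd).ne']

lemma deriv_deriv_of_hasDerivAt_speed {r : ℝ → ℝ} {t : ℝ}
    (hr : ∀ᶠ u in 𝓝 t, HasDerivAt r (speed U₀ h (r u)) u) (hρ : 0 < r t)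
    (hd : 0 < 2 * U₀ + 2 * h * r t) : deriv (deriv r) t = -U₀ / r t ^ 2 := by
  have hev : deriv r =ᶠ[𝓝 t] speed U₀ h ∘ r := hr.mono fun u hu ↦ hu.deriv
  rw [hev.deriv_eq,
    ((hasDerivAt_speed hρ hd).comp t hr.self_of_nhds).deriv]
  field_simp [(speed_pos hρ hd).ne']

lemma exists_isKeplerArc_deriv_pos (hU₀ : 0 < U₀) {a b : ℝ} (ha : 0 ≤ a) (hab : a < b)
    (hh : -U₀ / b < h) :
    ∃ τ r, IsKeplerArc U₀ h a b τ r ∧ ∀ t ∈ Ioo 0 τ, 0 < deriv r t := by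
  have hden := den_pos_of_mem_Icc hU₀ ha hab hh
  have hint := integrableOn_invSpeed hden
  have hTc := continuousOn_travelTime hint
  have hTm := strictMonoOn_travelTime_Icc hU₀ ha hab hh
  set T := travelTime U₀ h a
  set σ := invFunOn T (Icc a b)
  have hT0 : T a = 0 := travelTime_self
  have hσ_maps : MapsTo σ (Ioo 0 (T b)) (Ioo a b) := hT0 ▸ hTm.mapsTo_invFunOn_Ioo hab.le hTc
  have hσ_pos : ∀ t ∈ Ioo 0 (T b), 0 < σ t ∧ 0 < 2 * U₀ + 2 * h * σ t := fun t ht ↦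
    ⟨ha.trans_lt (hσ_maps ht).1, hden _ (Ioo_subset_Icc_self (hσ_maps ht))⟩
  have hσ_deriv : ∀ t ∈ Ioo 0 (T b), HasDerivAt σ (speed U₀ h (σ t)) t := fun t ht ↦ by
    obtain ⟨hρ0, hρd⟩ := hσ_pos t ht
    rw [← inv_eq_of_mul_eq_one_right (invSpeed_mul_speed hρ0 hρd)]
    exact hTm.hasDerivAt_invFunOn_Icc hab.le hTc (hT0 ▸ ht)
      (hasDerivAt_travelTime hint (hσ_maps ht) hρd.ne') (invSpeed_pos hρ0 hρd).ne'
  refine ⟨T b, σ, ⟨hT0 ▸ hTm (left_mem_Icc.2 hab.le) (right_mem_Icc.2 hab.le) hab, ?_, ?_, ?_,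
    fun t ht ↦ ?_⟩, fun t ht ↦ ?_⟩
  · simpa [hT0] using hTm.injOn.leftInvOn_invFunOn (left_mem_Icc.2 hab.le)
  · exact hTm.injOn.leftInvOn_invFunOn (right_mem_Icc.2 hab.le)
  · simpa [hT0] using hTm.continuousOn_invFunOn_Icc hab.le hTc
  · obtain ⟨hρ0, hρd⟩ := hσ_pos t ht
    refine ⟨hρ0, deriv_deriv_of_hasDerivAt_speed ?_ hρ0 hρd, ?_⟩
    · filter_upwards [Ioo_mem_nhds ht.1 ht.2] using hσ_deriv
    · rw [(hσ_deriv t ht).deriv, speed_sq hρ0 hρd]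
      ring
  · rw [(hσ_deriv t ht).deriv]
    exact speed_pos (hσ_pos t ht).1 (hσ_pos t ht).2

open Real
variable {p q E₁ E₂ : ℝ}

lemma cos_lt_one_of_mem_Ioo {E : ℝ} (hE : E ∈ Ioo 0 (2 * π)) : cos E < 1 :=
  (cos_le_one E).lt_of_ne fun h ↦ hE.1.ne'
    ((cos_eq_one_iff_of_lt_of_lt (by linarith [hE.1, pi_pos]) hE.2).1 h)

/-- Kepler's equation for radial orbits: the time from the eccentric anomaly `E₁` to `E`. -/
def keplerTime (q E₁ E : ℝ) : ℝ := q * (E - sin E - (E₁ - sin E₁))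

lemma hasDerivAt_keplerTime (q E₁ E : ℝ) :
    HasDerivAt (keplerTime q E₁) (q * (1 - cos E)) E :=
  (((hasDerivAt_id E).sub (hasDerivAt_sin E)).sub_const (E₁ - sin E₁)).const_mul q

lemma continuous_keplerTime (q E₁ : ℝ) : Continuous (keplerTime q E₁) := by
  unfold keplerTime; fun_prop

@[simp]
lemma keplerTime_self (q E₁ : ℝ) : keplerTime q E₁ E₁ = 0 := by
  simp [keplerTime]

lemma strictMonoOn_keplerTime (hq : 0 < q) (E₁ : ℝ) :
    StrictMonoOn (keplerTime q E₁) (Icc 0 (2 * π)) := by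
  refine strictMonoOn_of_deriv_pos (convex_Icc _ _) (continuous_keplerTime q E₁).continuousOn
    fun E hE ↦ ?_
  rw [interior_Icc] at hE
  rw [(hasDerivAt_keplerTime q E₁ E).deriv]
  exact mul_pos hq (sub_pos.2 (cos_lt_one_of_mem_Ioo hE))

lemma hasDerivAt_cycloid {Θ : ℝ → ℝ} {t : ℝ} (hΘ : HasDerivAt Θ (q * (1 - cos (Θ t)))⁻¹ t) :
    HasDerivAt (fun u ↦ p * (1 - cos (Θ u))) (p * sin (Θ t) / (q * (1 - cos (Θ t)))) t :=
  ((((hasDerivAt_cos (Θ t)).const_sub 1).const_mul p).comp t hΘ).congr_deriv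
    (by rw [div_eq_mul_inv]; ring)

lemma hasDerivAt_cycloid_velocity (hq : q ≠ 0) {E : ℝ} (hE : 1 - cos E ≠ 0) :
    HasDerivAt (fun E ↦ p * sin E / (q * (1 - cos E))) (-p / (q * (1 - cos E))) E := by
  have hden : HasDerivAt (fun E ↦ q * (1 - cos E)) (q * sin E) E := by
    simpa using ((hasDerivAt_cos E).const_sub 1).const_mul q
  refine (((hasDerivAt_sin E).const_mul p).div hden (mul_ne_zero hq hE)).congr_deriv ?_
  field_simp
  linear_combination (-p) * sin_sq_add_cos_sq E

section cycloid
variable (hpq : q ^ 2 * U₀ = p ^ 3)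
include hpq

/-- The cycloid `r = p (1 - cos E)`, `t = q (E - sin E)` solves `r'' = -U₀ / r²`
precisely because `q² U₀ = p³` (Kepler's third law). -/
lemma deriv_deriv_cycloid (hp : p ≠ 0) (hq : q ≠ 0) {Θ : ℝ → ℝ} {t : ℝ}
    (hΘ : ∀ᶠ u in 𝓝 t, HasDerivAt Θ (q * (1 - cos (Θ u)))⁻¹ u) (hE : 1 - cos (Θ t) ≠ 0) :
    deriv (deriv fun u ↦ p * (1 - cos (Θ u))) t = -U₀ / (p * (1 - cos (Θ t))) ^ 2 := by
  have hev : (deriv fun u ↦ p * (1 - cos (Θ u))) =ᶠ[𝓝 t]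
      (fun E ↦ p * sin E / (q * (1 - cos E))) ∘ Θ :=
    hΘ.mono fun u hu ↦ (hasDerivAt_cycloid hu).deriv
  rw [hev.deriv_eq, ((hasDerivAt_cycloid_velocity hq hE).comp t hΘ.self_of_nhds).deriv]
  field_simp
  linear_combination hpq

lemma cycloid_energy (hp : p ≠ 0) (hq : q ≠ 0) {E : ℝ} (hE : 1 - cos E ≠ 0) :
    (p * sin E / (q * (1 - cos E))) ^ 2 / 2 - U₀ / (p * (1 - cos E)) = -U₀ / (2 * p) := by
  field_simp
  linear_combination (-sin E ^ 2) * hpq + q ^ 2 * U₀ * sin_sq_add_cos_sq E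

end cycloid

def eccentricAnomaly (q E₁ E₂ : ℝ) : ℝ → ℝ := invFunOn (keplerTime q E₁) (Icc E₁ E₂)

def radialArc (p q E₁ E₂ t : ℝ) : ℝ := p * (1 - cos (eccentricAnomaly q E₁ E₂ t))

lemma strictMonoOn_keplerTime_Icc (hq : 0 < q) (h₁ : 0 ≤ E₁) (h₂ : E₂ ≤ 2 * π) :
    StrictMonoOn (keplerTime q E₁) (Icc E₁ E₂) :=
  (strictMonoOn_keplerTime hq E₁).mono (Icc_subset_Icc h₁ h₂)

lemma eccentricAnomaly_keplerTime (hq : 0 < q) (h₁ : 0 ≤ E₁) (h₂ : E₂ ≤ 2 * π) {E : ℝ}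
    (hE : E ∈ Icc E₁ E₂) : eccentricAnomaly q E₁ E₂ (keplerTime q E₁ E) = E :=
  (strictMonoOn_keplerTime_Icc hq h₁ h₂).injOn.leftInvOn_invFunOn hE

section anomaly
variable (hq : 0 < q) (h₁ : 0 ≤ E₁) (h₁₂ : E₁ ≤ E₂) (h₂ : E₂ ≤ 2 * π)
include hq h₁ h₁₂ h₂

lemma strictMonoOn_eccentricAnomaly :
    StrictMonoOn (eccentricAnomaly q E₁ E₂) (Icc 0 (keplerTime q E₁ E₂)) := by
  simpa [eccentricAnomaly] using
    (strictMonoOn_keplerTime_Icc hq h₁ h₂).strictMonoOn_invFunOn_Icc h₁₂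
    (continuous_keplerTime q E₁).continuousOn

lemma continuousOn_eccentricAnomaly :
    ContinuousOn (eccentricAnomaly q E₁ E₂) (Icc 0 (keplerTime q E₁ E₂)) := by
  simpa [eccentricAnomaly] using
    (strictMonoOn_keplerTime_Icc hq h₁ h₂).continuousOn_invFunOn_Icc h₁₂
    (continuous_keplerTime q E₁).continuousOn

lemma eccentricAnomaly_mem_Ioo {t : ℝ} (ht : t ∈ Ioo 0 (keplerTime q E₁ E₂)) :
    eccentricAnomaly q E₁ E₂ t ∈ Ioo E₁ E₂ := by
  simpa [eccentricAnomaly] using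
    (strictMonoOn_keplerTime_Icc hq h₁ h₂).mapsTo_invFunOn_Ioo h₁₂
    (continuous_keplerTime q E₁).continuousOn (by simpa using ht)

lemma one_sub_cos_eccentricAnomaly_pos {t : ℝ} (ht : t ∈ Ioo 0 (keplerTime q E₁ E₂)) :
    0 < 1 - cos (eccentricAnomaly q E₁ E₂ t) := by
  have hE := eccentricAnomaly_mem_Ioo hq h₁ h₁₂ h₂ ht
  exact sub_pos.2 (cos_lt_one_of_mem_Ioo ⟨h₁.trans_lt hE.1, hE.2.trans_le h₂⟩)

lemma hasDerivAt_eccentricAnomaly {t : ℝ} (ht : t ∈ Ioo 0 (keplerTime q E₁ E₂)) :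
    HasDerivAt (eccentricAnomaly q E₁ E₂) (q * (1 - cos (eccentricAnomaly q E₁ E₂ t)))⁻¹ t :=
  (strictMonoOn_keplerTime_Icc hq h₁ h₂).hasDerivAt_invFunOn_Icc h₁₂
    (continuous_keplerTime q E₁).continuousOn (by simpa using ht) (hasDerivAt_keplerTime _ _ _)
    (mul_pos hq (one_sub_cos_eccentricAnomaly_pos hq h₁ h₁₂ h₂ ht)).ne'

lemma hasDerivAt_radialArc {t : ℝ} (ht : t ∈ Ioo 0 (keplerTime q E₁ E₂)) :
    HasDerivAt (radialArc p q E₁ E₂) (p * sin (eccentricAnomaly q E₁ E₂ t) /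
      (q * (1 - cos (eccentricAnomaly q E₁ E₂ t)))) t :=
  hasDerivAt_cycloid (hasDerivAt_eccentricAnomaly hq h₁ h₁₂ h₂ ht)

end anomaly

lemma isKeplerArc_radialArc (hp : 0 < p) (hq : 0 < q) (hpq : q ^ 2 * U₀ = p ^ 3)
    (h₁ : 0 ≤ E₁) (h₁₂ : E₁ < E₂) (h₂ : E₂ ≤ 2 * π) :
    IsKeplerArc U₀ (-U₀ / (2 * p)) (p * (1 - cos E₁)) (p * (1 - cos E₂))
      (keplerTime q E₁ E₂) (radialArc p q E₁ E₂) := by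
  have hmono := strictMonoOn_keplerTime_Icc hq h₁ h₂
  have hΘ₁ := eccentricAnomaly_keplerTime hq h₁ h₂ (left_mem_Icc.2 h₁₂.le)
  rw [keplerTime_self] at hΘ₁
  refine ⟨by simpa using hmono (left_mem_Icc.2 h₁₂.le) (right_mem_Icc.2 h₁₂.le) h₁₂,
    by rw [radialArc, hΘ₁],
    by rw [radialArc, eccentricAnomaly_keplerTime hq h₁ h₂ (right_mem_Icc.2 h₁₂.le)],
    (continuous_const.mul (continuous_const.sub continuous_cos)).comp_continuousOn
      (continuousOn_eccentricAnomaly hq h₁ h₁₂.le h₂), fun t ht ↦ ?_⟩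
  have hc := one_sub_cos_eccentricAnomaly_pos hq h₁ h₁₂.le h₂ ht
  refine ⟨mul_pos hp hc, deriv_deriv_cycloid hpq hp.ne' hq.ne' ?_ hc.ne', ?_⟩
  · filter_upwards [Ioo_mem_nhds ht.1 ht.2] with u hu
      using hasDerivAt_eccentricAnomaly hq h₁ h₁₂.le h₂ hu
  · rw [(hasDerivAt_radialArc hq h₁ h₁₂.le h₂ ht).deriv]
    exact cycloid_energy hpq hp.ne' hq.ne' hc.ne'

lemma isTurningTime_radialArc (hp : 0 < p) (hq : 0 < q) (h₁ : 0 ≤ E₁) (h₁π : E₁ < π)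
    (hπ₂ : π < E₂) (h₂ : E₂ ≤ 2 * π) :
    IsTurningTime (radialArc p q E₁ E₂) (keplerTime q E₁ E₂) (keplerTime q E₁ π) := by
  have h₁₂ : E₁ ≤ E₂ := (h₁π.trans hπ₂).le
  have hmono := strictMonoOn_keplerTime_Icc hq h₁ h₂
  have hπ : π ∈ Icc E₁ E₂ := ⟨h₁π.le, hπ₂.le⟩
  have ht₀ : keplerTime q E₁ π ∈ Ioo 0 (keplerTime q E₁ E₂) := by
    constructor
    · simpa using hmono (left_mem_Icc.2 h₁₂) hπ h₁π
    · exact hmono hπ (right_mem_Icc.2 h₁₂) hπ₂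
  have hΘt₀ := eccentricAnomaly_keplerTime hq h₁ h₂ hπ
  have hΘmono := strictMonoOn_eccentricAnomaly hq h₁ h₁₂ h₂
  have hderiv : ∀ t ∈ Ioo 0 (keplerTime q E₁ E₂), deriv (radialArc p q E₁ E₂) t =
      p * sin (eccentricAnomaly q E₁ E₂ t) / (q * (1 - cos (eccentricAnomaly q E₁ E₂ t))) :=
    fun t ht ↦ (hasDerivAt_radialArc hq h₁ h₁₂ h₂ ht).deriv
  refine ⟨ht₀, by rw [hderiv _ ht₀, hΘt₀, sin_pi]; simp, fun t ht ↦ ?_, fun t ht ↦ ?_⟩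
  · have ht' : t ∈ Ioo 0 (keplerTime q E₁ E₂) := ⟨ht.1, ht.2.trans ht₀.2⟩
    have hE := eccentricAnomaly_mem_Ioo hq h₁ h₁₂ h₂ ht'
    have hlt : eccentricAnomaly q E₁ E₂ t < π :=
      hΘt₀ ▸ hΘmono (Ioo_subset_Icc_self ht') (Ioo_subset_Icc_self ht₀) ht.2
    rw [hderiv t ht']
    exact div_pos (mul_pos hp (sin_pos_of_pos_of_lt_pi (h₁.trans_lt hE.1) hlt))
      (mul_pos hq (one_sub_cos_eccentricAnomaly_pos hq h₁ h₁₂ h₂ ht'))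
  · have ht' : t ∈ Ioo 0 (keplerTime q E₁ E₂) := ⟨ht₀.1.trans ht.1, ht.2⟩
    have hE := eccentricAnomaly_mem_Ioo hq h₁ h₁₂ h₂ ht'
    have hgt : π < eccentricAnomaly q E₁ E₂ t :=
      hΘt₀ ▸ hΘmono (Ioo_subset_Icc_self ht₀) (Ioo_subset_Icc_self ht') ht.1
    have hsin : sin (eccentricAnomaly q E₁ E₂ t) < 0 := by
      rw [← neg_pos, ← sin_sub_pi]
      exact sin_pos_of_pos_of_lt_pi (by linarith) (by linarith [hE.2])
    rw [hderiv t ht']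
    exact div_neg_of_neg_of_pos (mul_neg_of_pos_of_neg hp hsin)
      (mul_pos hq (one_sub_cos_eccentricAnomaly_pos hq h₁ h₁₂ h₂ ht'))

lemma exists_isKeplerArc_turning (hU₀ : 0 < U₀) {a b : ℝ} (ha : 0 ≤ a) (hab : a < b)
    (hh : h < 0) (hbm : b < -U₀ / h) :
    ∃ τ r t₀, IsKeplerArc U₀ h a b τ r ∧ IsTurningTime r τ t₀ := by
  set p := -U₀ / (2 * h)
  have hp : 0 < p := div_pos_of_neg_of_neg (neg_neg_of_pos hU₀) (by linarith)
  have hph : -U₀ / (2 * p) = h := by simp only [p]; field_simp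
  have h2p : -U₀ / h = 2 * p := by simp only [p]; field_simp
  set q := √(p ^ 3 / U₀)
  have hq : 0 < q := Real.sqrt_pos.2 (by positivity)
  have hpq : q ^ 2 * U₀ = p ^ 3 := by
    rw [Real.sq_sqrt (by positivity), div_mul_cancel₀ _ hU₀.ne']
  have hb2 : b / p < 2 := by rw [div_lt_iff₀ hp]; linarith
  have ha2 : a / p < 2 := by rw [div_lt_iff₀ hp]; linarith
  have ha0 : 0 ≤ a / p := div_nonneg ha hp.le
  have hb0 : 0 < b / p := div_pos (ha.trans_lt hab) hp
  set E₁ := arccos (1 - a / p)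
  set E₂ := 2 * π - arccos (1 - b / p)
  have hpa : p * (1 - cos E₁) = a := by
    rw [cos_arccos (by linarith) (by linarith)]; field_simp; ring
  have hpb : p * (1 - cos E₂) = b := by
    rw [cos_two_pi_sub, cos_arccos (by linarith) (by linarith)]; field_simp; ring
  have h₁ : 0 ≤ E₁ := arccos_nonneg _
  have h₁π : E₁ < π := arccos_lt_pi.2 (by linarith)
  have hπ₂ : π < E₂ := by linarith [arccos_lt_pi.2 (by linarith : -1 < 1 - b / p)]
  have h₂ : E₂ ≤ 2 * π := by linarith [arccos_nonneg (1 - b / p)]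
  have harc := isKeplerArc_radialArc (U₀ := U₀) hp hq hpq h₁ (h₁π.trans hπ₂) h₂
  rw [hpa, hpb, hph] at harc
  exact ⟨_, _, _, harc, isTurningTime_radialArc hp hq h₁ h₁π hπ₂ h₂⟩

end Kepler

end

/-- For `0 ≤ a < b`: for any energy `h ≥ 0` there is exactly one solution arc of
energy `h` joining `a` to `b`, and it is increasing.  For `-U₀/b < h < 0` there
are exactly two such arcs: one increasing from `a` to `b`, and one increasing
from `a` up to `-U₀/h` and then decreasing down to `b`. -/
theorem kepler_arcs_of_given_energy (U₀ : ℝ) (hU₀ : 0 < U₀)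
    (a b : ℝ) (ha : 0 ≤ a) (hab : a < b) :
    (∀ h : ℝ, 0 ≤ h →
      (∃ τ r, IsKeplerArc U₀ h a b τ r ∧ StrictMonoOn r (Icc 0 τ)) ∧
      (∀ τ₁ r₁ τ₂ r₂, IsKeplerArc U₀ h a b τ₁ r₁ → IsKeplerArc U₀ h a b τ₂ r₂ →
        τ₁ = τ₂ ∧ EqOn r₁ r₂ (Icc 0 τ₁))) ∧
    (∀ h : ℝ, -U₀ / b < h → h < 0 →
      ∃ τ₁ r₁ τ₂ r₂,
        IsKeplerArc U₀ h a b τ₁ r₁ ∧ StrictMonoOn r₁ (Icc 0 τ₁) ∧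
        IsKeplerArc U₀ h a b τ₂ r₂ ∧
        (∃ t₀ ∈ Ioo 0 τ₂, r₂ t₀ = -U₀ / h ∧
          StrictMonoOn r₂ (Icc 0 t₀) ∧ StrictAntiOn r₂ (Icc t₀ τ₂)) ∧
        (∀ τ r, IsKeplerArc U₀ h a b τ r →
          (τ = τ₁ ∧ EqOn r r₁ (Icc 0 τ)) ∨ (τ = τ₂ ∧ EqOn r r₂ (Icc 0 τ)))) := by
  have hb : 0 < b := ha.trans_lt hab
  refine ⟨fun h hh ↦ ?_, fun h hhb hh ↦ ?_⟩
  · have hhb : -U₀ / b < h := (div_neg_of_neg_of_pos (neg_neg_of_pos hU₀) hb).trans_le hh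
    have houtward (τ r) (hr : IsKeplerArc U₀ h a b τ r) : ∀ t ∈ Ioo 0 τ, 0 < deriv r t :=
      (hr.deriv_pos_or_turning hU₀ hab).resolve_right fun ⟨_, ht₀⟩ ↦
        (hr.turning_radius hU₀ ht₀).1.not_ge hh
    obtain ⟨τ, r, hr, hpos⟩ := Kepler.exists_isKeplerArc_deriv_pos hU₀ ha hab hhb
    exact ⟨⟨τ, r, hr, hr.strictMonoOn_of_deriv_pos hpos⟩, fun τ₁ r₁ τ₂ r₂ hr₁ hr₂ ↦
      hr₁.eqOn_of_deriv_pos hU₀ ha hab hhb hr₂ (houtward _ _ hr₁) (houtward _ _ hr₂)⟩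
  · have hbm : b < -U₀ / h := by
      rw [div_lt_iff₀ hb] at hhb
      rw [lt_div_iff_of_neg hh]
      linarith
    obtain ⟨τ₁, r₁, hr₁, hpos₁⟩ := Kepler.exists_isKeplerArc_deriv_pos hU₀ ha hab hhb
    obtain ⟨τ₂, r₂, t₀, hr₂, ht₀⟩ := Kepler.exists_isKeplerArc_turning hU₀ ha hab hh hbm
    refine ⟨τ₁, r₁, τ₂, r₂, hr₁, hr₁.strictMonoOn_of_deriv_pos hpos₁, hr₂,
      ⟨t₀, ht₀.1, (hr₂.turning_radius hU₀ ht₀).2, hr₂.strictMonoOn_of_isTurningTime ht₀,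
        hr₂.strictAntiOn_of_isTurningTime ht₀⟩, fun τ r hr ↦ ?_⟩
    rcases hr.deriv_pos_or_turning hU₀ hab with hpos | ⟨t₁, ht₁⟩
    · exact .inl (hr.eqOn_of_deriv_pos hU₀ ha hab hhb hr₁ hpos hpos₁)
    · exact .inr (hr.eqOn_of_turning hU₀ ha hab hr₂ ht₁ ht₀)
end

section
/- Fix ε̄ > 0 and U₀ > 0. For the one-dimensional Kepler problem with potential U₀/r, the energy of the unique solution joining 0 to r in time 1+ε satisfies h(0,r;1+ε) = (1/2)(r/(1+ε))² + o(r²) as r → ∞, uniformly for ε ∈ [0,ε̄]. -/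
/-!
A solution leaving the origin with energy `a / 2 > 0` satisfies `ρ'² = a + 2U₀ / ρ`, so it
reaches `r` at time `T_a(r) = ∫₀ʳ dy / √(a + 2U₀ / y)`, an explicit function; the arc itself is the
inverse of `T_a`. Since `√a ≤ √(a + 2U₀ / y) ≤ √a + √(2U₀)` for `y ≥ 1`, we get
`(r - 1) / (√a + √(2U₀)) ≤ T_a(r) ≤ r / √a`. Choosing `a` with `T_a(r) = s` by the intermediate
value theorem, these bounds give `√a = r / s + O(1)`, hence `a / 2 = (r / s)² / 2 + O(r)` with a
constant depending only on `U₀`, uniformly in `s ≥ 1`.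
-/

open Set

/-- `IsKeplerArcTime U₀ a b s r` : `r` is a solution arc of `r'' = -U₀/r²`
joining `a` to `b` in time `s`, positive in the interior. -/
def IsKeplerArcTime (U₀ a b s : ℝ) (r : ℝ → ℝ) : Prop :=
  r 0 = a ∧ r s = b ∧ ContinuousOn r (Icc 0 s) ∧
    ∀ t ∈ Ioo 0 s, 0 < r t ∧ deriv (deriv r) t = -U₀ / (r t) ^ 2

open Real

/-- `∫₀ˣ dy / √(a + b / y)`: the time a solution of `ρ'² = a + b / ρ` needs to go from `0`
to `x`. -/
noncomputable def keplerTime (a b x : ℝ) : ℝ :=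
  √(x * (a * x + b)) / a - b / (a * √a) * arsinh √(a * x / b)

section KeplerTime

variable {a b x : ℝ}

@[simp]
lemma keplerTime_zero (a b : ℝ) : keplerTime a b 0 = 0 := by
  simp [keplerTime]

lemma continuous_keplerTime (a b : ℝ) : Continuous (keplerTime a b) :=
  ((Continuous.sqrt (by fun_prop)).div_const a).sub
    (continuous_const.mul (continuous_arsinh.comp (Continuous.sqrt (by fun_prop))))

lemma continuousAt_keplerTime_left (b x : ℝ) (ha : 0 < a) :
    ContinuousAt (fun a ↦ keplerTime a b x) a := by
  have : a * √a ≠ 0 := by positivity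
  exact ((Continuous.sqrt (f := fun a ↦ x * (a * x + b)) (by fun_prop)).continuousAt.div
    continuousAt_id ha.ne').sub
    ((continuousAt_const.div (continuousAt_id.mul (continuous_sqrt.continuousAt)) this).mul
      (continuous_arsinh.comp (Continuous.sqrt (by fun_prop))).continuousAt)

lemma hasDerivAt_keplerTime (ha : 0 < a) (hb : 0 < b) (hx : 0 < x) :
    HasDerivAt (keplerTime a b) (√(a + b / x))⁻¹ x := by
  have hp : HasDerivAt (fun y ↦ y * (a * y + b)) (2 * a * x + b) x :=
    ((hasDerivAt_id' x).fun_mul (((hasDerivAt_id' x).const_mul a).add_const b)).congr_deriv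
      (by ring)
  have hq : HasDerivAt (fun y ↦ a * y / b) (a / b) x :=
    (((hasDerivAt_id' x).const_mul a).div_const b).congr_deriv (by ring)
  have hT := (((hasDerivAt_sqrt (by positivity)).comp x hp).div_const a).sub
    (((hasDerivAt_arsinh _).comp x ((hasDerivAt_sqrt (by positivity)).comp x hq)).const_mul
      (b / (a * √a)))
  refine hT.congr_deriv ?_
  have hx' : √x ^ 2 = x := sq_sqrt hx.le
  have ha' : √a ^ 2 = a := sq_sqrt ha.le
  have hb' : √b ^ 2 = b := sq_sqrt hb.le
  have e1 : √(a + b / x) = √(a * x + b) / √x := by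
    rw [← sqrt_div' _ hx.le]; congr 1; field_simp
  have e2 : √(x * (a * x + b)) = √x * √(a * x + b) := sqrt_mul hx.le _
  have e3 : √(1 + √(a * x / b) ^ 2) = √(a * x + b) / √b := by
    rw [sq_sqrt (by positivity), ← sqrt_div' _ hb.le]; congr 1; field_simp; ring
  have e4 : √(a * x / b) = √a * √x / √b := by rw [sqrt_div' _ hb.le, sqrt_mul ha.le]
  have : 0 < √(a * x + b) := sqrt_pos.2 (by positivity)
  have : 0 < √x := sqrt_pos.2 hx
  have : 0 < √a := sqrt_pos.2 ha
  have : 0 < √b := sqrt_pos.2 hb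
  simp only [Function.comp_apply]
  rw [e1, e2, e3, e4]
  set p := √x
  set q := √(a * x + b)
  set α := √a
  set β := √b
  rw [← hx', ← ha', ← hb']
  field_simp
  ring

lemma strictMonoOn_keplerTime (ha : 0 < a) (hb : 0 < b) :
    StrictMonoOn (keplerTime a b) (Ici 0) := by
  refine strictMonoOn_of_deriv_pos (convex_Ici 0) (continuous_keplerTime a b).continuousOn ?_
  intro x hx
  rw [interior_Ici] at hx
  rw [(hasDerivAt_keplerTime ha hb hx).deriv]
  have : 0 < a + b / x := by have : (0 : ℝ) < x := hx; positivity
  positivity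

lemma keplerTime_nonneg (ha : 0 < a) (hb : 0 < b) (hx : 0 ≤ x) : 0 ≤ keplerTime a b x := by
  simpa using (strictMonoOn_keplerTime ha hb).monotoneOn self_mem_Ici hx hx

lemma differentiableOn_keplerTime (ha : 0 < a) (hb : 0 < b) :
    DifferentiableOn ℝ (keplerTime a b) (Ioi 0) :=
  fun _ hx ↦ (hasDerivAt_keplerTime ha hb hx).differentiableAt.differentiableWithinAt

lemma sqrt_mul_keplerTime_le (ha : 0 < a) (hb : 0 < b) (hx : 0 ≤ x) :
    √a * keplerTime a b x ≤ x := by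
  have hderiv : ∀ y ∈ interior (Ici (0 : ℝ)), deriv (keplerTime a b) y ≤ (√a)⁻¹ := by
    intro y hy
    rw [interior_Ici] at hy
    rw [(hasDerivAt_keplerTime ha hb hy).deriv]
    have : 0 ≤ b / y := div_nonneg hb.le (le_of_lt hy)
    exact inv_anti₀ (sqrt_pos.2 ha) (sqrt_le_sqrt (by linarith))
  have := (convex_Ici 0).image_sub_le_mul_sub_of_deriv_le
    (continuous_keplerTime a b).continuousOn
    (by rw [interior_Ici]; exact differentiableOn_keplerTime ha hb) hderiv 0 self_mem_Ici x hx hx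
  rwa [keplerTime_zero, sub_zero, sub_zero, inv_mul_eq_div, le_div_iff₀' (sqrt_pos.2 ha)] at this

lemma sub_one_le_mul_keplerTime (ha : 0 < a) (hb : 0 < b) (hx : 1 ≤ x) :
    x - 1 ≤ (√a + √b) * keplerTime a b x := by
  have hsum : 0 < √a + √b := by have := sqrt_pos.2 ha; positivity
  have hderiv : ∀ y ∈ interior (Ici (1 : ℝ)), (√a + √b)⁻¹ ≤ deriv (keplerTime a b) y := by
    intro y hy
    rw [interior_Ici] at hy
    have hy : (1 : ℝ) < y := hy
    rw [(hasDerivAt_keplerTime ha hb (by linarith)).deriv]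
    refine inv_anti₀ (sqrt_pos.2 (by positivity)) ((sqrt_le_left hsum.le).2 ?_)
    have : b / y ≤ b := div_le_self hb.le hy.le
    nlinarith [sq_sqrt ha.le, sq_sqrt hb.le, mul_pos (sqrt_pos.2 ha) (sqrt_pos.2 hb)]
  have := (convex_Ici 1).mul_sub_le_image_sub_of_le_deriv
    (continuous_keplerTime a b).continuousOn
    ((differentiableOn_keplerTime ha hb).mono
      (by rw [interior_Ici]; exact Ioi_subset_Ioi zero_le_one)) hderiv 1 self_mem_Ici x hx hx
  rw [inv_mul_eq_div, div_le_iff₀' hsum] at this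
  nlinarith [keplerTime_nonneg ha hb zero_le_one]

end KeplerTime

section KeplerArc

variable {a b : ℝ}

-- Continued by the identity on `(-∞, 0)` so that it becomes an order isomorphism of `ℝ`.
noncomputable def keplerTimeExt (a b x : ℝ) : ℝ := if x < 0 then x else keplerTime a b x

lemma keplerTimeExt_of_nonneg {x : ℝ} (hx : 0 ≤ x) : keplerTimeExt a b x = keplerTime a b x :=
  if_neg hx.not_gt

lemma strictMono_keplerTimeExt (ha : 0 < a) (hb : 0 < b) : StrictMono (keplerTimeExt a b) := by
  intro x y hxy
  rcases lt_or_ge y 0 with hy | hy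
  · simpa [keplerTimeExt, hy, hxy.trans hy] using hxy
  rw [keplerTimeExt_of_nonneg hy]
  rcases lt_or_ge x 0 with hx | hx
  · rw [keplerTimeExt, if_pos hx]
    exact hx.trans_le (keplerTime_nonneg ha hb hy)
  · rw [keplerTimeExt_of_nonneg hx]
    exact strictMonoOn_keplerTime ha hb hx hy hxy

lemma surjective_keplerTimeExt (ha : 0 < a) (hb : 0 < b) :
    Function.Surjective (keplerTimeExt a b) := by
  intro t
  rcases lt_or_ge t 0 with ht | ht
  · exact ⟨t, if_pos ht⟩
  have hsum : 0 < √a + √b := by have := sqrt_pos.2 ha; positivity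
  set M := 1 + (√a + √b) * t
  have hM : 1 ≤ M := by have := mul_nonneg hsum.le ht; linarith
  have hMt : t ≤ keplerTime a b M := by
    have := sub_one_le_mul_keplerTime ha hb hM
    rw [show M - 1 = (√a + √b) * t by ring] at this
    exact le_of_mul_le_mul_left this hsum
  obtain ⟨x, hx, hxt⟩ := intermediate_value_Icc (by linarith : (0 : ℝ) ≤ M)
    (continuous_keplerTime a b).continuousOn (⟨by simpa using ht, hMt⟩)
  exact ⟨x, by rw [keplerTimeExt_of_nonneg hx.1, hxt]⟩

noncomputable def keplerTimeIso (ha : 0 < a) (hb : 0 < b) : ℝ ≃o ℝ :=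
  StrictMono.orderIsoOfSurjective _ (strictMono_keplerTimeExt ha hb)
    (surjective_keplerTimeExt ha hb)

variable (ha : 0 < a) (hb : 0 < b)

lemma keplerTimeIso_apply_of_nonneg {x : ℝ} (hx : 0 ≤ x) :
    keplerTimeIso ha hb x = keplerTime a b x :=
  keplerTimeExt_of_nonneg hx

lemma keplerTimeIso_symm_apply_keplerTime {x : ℝ} (hx : 0 ≤ x) :
    (keplerTimeIso ha hb).symm (keplerTime a b x) = x := by
  rw [← keplerTimeIso_apply_of_nonneg ha hb hx, OrderIso.symm_apply_apply]

lemma keplerTimeIso_symm_pos {t : ℝ} (ht : 0 < t) : 0 < (keplerTimeIso ha hb).symm t := by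
  have h0 : (keplerTimeIso ha hb).symm 0 = 0 := by
    simpa using keplerTimeIso_symm_apply_keplerTime ha hb le_rfl
  simpa [h0] using (keplerTimeIso ha hb).symm.strictMono ht

lemma hasDerivAt_keplerTimeIso_symm {t : ℝ} (ht : 0 < t) :
    HasDerivAt (keplerTimeIso ha hb).symm (√(a + b / (keplerTimeIso ha hb).symm t)) t := by
  set ρ := (keplerTimeIso ha hb).symm
  have hρ := keplerTimeIso_symm_pos ha hb ht
  have hT : HasDerivAt (keplerTimeIso ha hb) (√(a + b / ρ t))⁻¹ (ρ t) :=
    (hasDerivAt_keplerTime ha hb hρ).congr_of_eventuallyEq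
      (eventually_gt_nhds hρ |>.mono fun y hy ↦ keplerTimeIso_apply_of_nonneg ha hb hy.le)
  simpa using hT.of_local_left_inverse ρ.continuous.continuousAt
    (inv_ne_zero (sqrt_pos.2 (by positivity)).ne')
    (Filter.Eventually.of_forall (keplerTimeIso ha hb).apply_symm_apply)

lemma deriv_keplerTimeIso_symm_sq {t : ℝ} (ht : 0 < t) :
    deriv (keplerTimeIso ha hb).symm t ^ 2 = a + b / (keplerTimeIso ha hb).symm t := by
  rw [(hasDerivAt_keplerTimeIso_symm ha hb ht).deriv,
    sq_sqrt (by have := keplerTimeIso_symm_pos ha hb ht; positivity)]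

lemma deriv_deriv_keplerTimeIso_symm {t : ℝ} (ht : 0 < t) :
    deriv (deriv (keplerTimeIso ha hb).symm) t =
      -(b / 2) / (keplerTimeIso ha hb).symm t ^ 2 := by
  have hρ := keplerTimeIso_symm_pos ha hb ht
  have hρ' : deriv (keplerTimeIso ha hb).symm =ᶠ[nhds t]
      fun u ↦ √(a + b / (keplerTimeIso ha hb).symm u) :=
    eventually_gt_nhds ht |>.mono fun u hu ↦ (hasDerivAt_keplerTimeIso_symm ha hb hu).deriv
  have hρ'' := ((hasDerivAt_const t b).fun_div (hasDerivAt_keplerTimeIso_symm ha hb ht)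
    hρ.ne').const_add a |>.sqrt (by positivity)
  rw [hρ'.deriv_eq, hρ''.deriv]
  have hspeed : 0 < √(a + b / (keplerTimeIso ha hb).symm t) := sqrt_pos.2 (by positivity)
  generalize √(a + b / (keplerTimeIso ha hb).symm t) = v at hspeed ⊢
  field_simp
  ring

end KeplerArc

theorem isKeplerArcTime_keplerTimeIso_symm {a b x : ℝ} (ha : 0 < a) (hb : 0 < b) (hx : 0 ≤ x) :
    IsKeplerArcTime (b / 2) 0 x (keplerTime a b x) (keplerTimeIso ha hb).symm := by
  refine ⟨by simpa using keplerTimeIso_symm_apply_keplerTime ha hb le_rfl,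
    keplerTimeIso_symm_apply_keplerTime ha hb hx,
    (keplerTimeIso ha hb).symm.continuous.continuousOn, fun t ht ↦ ?_⟩
  exact ⟨keplerTimeIso_symm_pos ha hb ht.1, deriv_deriv_keplerTimeIso_symm ha hb ht.1⟩

theorem exists_keplerTime_eq {b s r : ℝ} (hb : 0 < b) (hs : 0 < s) (hr : 1 + s * (1 + √b) ≤ r) :
    ∃ a, 0 < a ∧ keplerTime a b r = s := by
  have hr0 : 0 < r := by have := sqrt_nonneg b; nlinarith
  set A := (r / s) ^ 2 + 1
  have hA : 1 ≤ A := le_add_of_nonneg_left (sq_nonneg _)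
  have hsA : r / s < √A := by rw [lt_sqrt (by positivity)]; linarith
  have hTA : keplerTime A b r ≤ s := by
    have h := sqrt_mul_keplerTime_le (by positivity) hb hr0.le (a := A)
    rw [div_lt_iff₀ hs] at hsA
    nlinarith [keplerTime_nonneg (by positivity : (0 : ℝ) < A) hb hr0.le]
  have hT1 : s ≤ keplerTime 1 b r := by
    have h := sub_one_le_mul_keplerTime one_pos hb (by nlinarith [sqrt_nonneg b] : 1 ≤ r)
    rw [sqrt_one] at h
    nlinarith [sqrt_nonneg b]
  obtain ⟨a, ha, hTa⟩ := intermediate_value_Icc' hA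
    (fun a ha ↦ (continuousAt_keplerTime_left b r (one_pos.trans_le ha.1)).continuousWithinAt)
    ⟨hTA, hT1⟩
  exact ⟨a, one_pos.trans_le ha.1, hTa⟩

lemma abs_half_sq_sub_half_sq_div_le {u c s r : ℝ} (hu : 0 ≤ u) (hs : 1 ≤ s) (hsu : u * s ≤ r)
    (hr : r - 1 ≤ (u + c) * s) : |u ^ 2 / 2 - (1 / 2) * (r / s) ^ 2| ≤ (1 + c) * r := by
  have hs0 : 0 < s := one_pos.trans_le hs
  have hlow : u ≤ r / s := by rw [le_div_iff₀ hs0]; linarith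
  have hhigh : r / s - u ≤ 1 + c := by
    rw [div_sub' hs0.ne', div_le_iff₀ hs0]; nlinarith
  have hrs : r / s ≤ r := div_le_self (by nlinarith) hs
  have hdiff : (r / s) ^ 2 - u ^ 2 ≤ (1 + c) * (2 * r) :=
    calc (r / s) ^ 2 - u ^ 2 = (r / s - u) * (r / s + u) := by ring
      _ ≤ (1 + c) * (2 * r) :=
        mul_le_mul hhigh (by linarith) (by linarith) (by linarith)
  rw [abs_le]; constructor <;> nlinarith

theorem exists_isKeplerArcTime_energy_near {U₀ s r : ℝ} (hU₀ : 0 < U₀) (hs : 1 ≤ s)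
    (hr : 1 + s * (1 + √(2 * U₀)) ≤ r) :
    ∃ a ρ, IsKeplerArcTime U₀ 0 r s ρ ∧
      (∀ t ∈ Ioo 0 s, deriv ρ t ^ 2 / 2 - U₀ / ρ t = a / 2) ∧
      |a / 2 - (1 / 2) * (r / s) ^ 2| ≤ (1 + √(2 * U₀)) * r := by
  have hb : 0 < 2 * U₀ := by positivity
  have hr1 : 1 ≤ r := by
    have : 0 ≤ s * (1 + √(2 * U₀)) := by positivity
    linarith
  have hr0 : 0 ≤ r := zero_le_one.trans hr1
  obtain ⟨a, ha, hTa⟩ := exists_keplerTime_eq hb (one_pos.trans_le hs) hr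
  refine ⟨a, (keplerTimeIso ha hb).symm, ?_, fun t ht ↦ ?_, ?_⟩
  · simpa [← hTa] using isKeplerArcTime_keplerTimeIso_symm ha hb hr0
  · rw [deriv_keplerTimeIso_symm_sq ha hb ht.1]
    ring
  · have hlow := sqrt_mul_keplerTime_le ha hb hr0
    have hhigh := sub_one_le_mul_keplerTime ha hb hr1
    rw [hTa] at hlow hhigh
    have := abs_half_sq_sub_half_sq_div_le (sqrt_nonneg a) hs hlow hhigh
    rwa [sq_sqrt ha.le] at this

theorem kepler_energy_asymptotics_general (U₀ : ℝ) (hU₀ : 0 < U₀)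
    (εbar : ℝ)
    (h : ℝ → ℝ → ℝ)
    (hh : ∀ ε ∈ Icc (0 : ℝ) εbar, ∀ r > (0 : ℝ), ∀ ρ : ℝ → ℝ,
      IsKeplerArcTime U₀ 0 r (1 + ε) ρ →
      ∀ t ∈ Ioo (0 : ℝ) (1 + ε), (deriv ρ t) ^ 2 / 2 - U₀ / ρ t = h ε r) :
    ∀ δ > (0 : ℝ), ∃ R : ℝ, ∀ r ≥ R, ∀ ε ∈ Icc (0 : ℝ) εbar,
      |h ε r - (1 / 2) * (r / (1 + ε)) ^ 2| ≤ δ * r ^ 2 := by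
  intro δ hδ
  set c := √(2 * U₀)
  refine ⟨max (1 + (1 + εbar) * (1 + c)) ((1 + c) / δ), fun r hr ε hε ↦ ?_⟩
  obtain ⟨hrεbar, hrδ⟩ := max_le_iff.1 hr
  rw [div_le_iff₀ hδ] at hrδ
  have hs : 1 ≤ 1 + ε := le_add_of_nonneg_right hε.1
  have hr_arc : 1 + (1 + ε) * (1 + c) ≤ r := le_trans (by gcongr; exact hε.2) hrεbar
  have hr0 : 0 < r := lt_of_lt_of_le (by positivity) hr_arc
  obtain ⟨a, ρ, harc, henergy, hbound⟩ := exists_isKeplerArcTime_energy_near hU₀ hs hr_arc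
  have hmid : (1 + ε) / 2 ∈ Ioo 0 (1 + ε) := ⟨by positivity, by linarith⟩
  rw [← hh ε hε r hr0 ρ harc _ hmid, henergy _ hmid]
  calc |a / 2 - 1 / 2 * (r / (1 + ε)) ^ 2| ≤ (1 + c) * r := hbound
    _ ≤ δ * r * r := by gcongr; linarith
    _ = δ * r ^ 2 := by ring

/-- The energy of the unique Kepler solution joining `0` to `r` in time `1+ε`
satisfies `h(0,r;1+ε) = (1/2)(r/(1+ε))² + o(r²)` as `r → ∞`, uniformly for
`ε ∈ [0,ε̄]`. -/
theorem kepler_energy_asymptotics (U₀ : ℝ) (hU₀ : 0 < U₀)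
    (εbar : ℝ) (hεbar : 0 < εbar)
    (h : ℝ → ℝ → ℝ)
    (hh : ∀ ε ∈ Icc (0 : ℝ) εbar, ∀ r > (0 : ℝ), ∀ ρ : ℝ → ℝ,
      IsKeplerArcTime U₀ 0 r (1 + ε) ρ →
      ∀ t ∈ Ioo (0 : ℝ) (1 + ε), (deriv ρ t) ^ 2 / 2 - U₀ / ρ t = h ε r) :
    ∀ δ > (0 : ℝ), ∃ R : ℝ, ∀ r ≥ R, ∀ ε ∈ Icc (0 : ℝ) εbar,
      |h ε r - (1 / 2) * (r / (1 + ε)) ^ 2| ≤ δ * r ^ 2 :=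
  kepler_energy_asymptotics_general U₀ hU₀ εbar h hh
end

section
/- (Direct-path property of planar Kepler minimizers in polar coordinates) Let ρ : [0,S] → (0,∞) and φ : [0,S] → ℝ be absolutely continuous, with φ(S) − φ(0) = 2kπ + a for an integer k ≥ 1 and a ∈ (−π,π]. Define φ̄(u) = φ(0) + (a/(2kπ+a))(φ(u) − φ(0)). Then the planar curve ρ e^{iφ̄} has the same endpoints as ρ e^{iφ} (up to the identification e^{iφ(S)} = e^{iφ̄(S)}), and its Kepler action ∫₀^S (½(ρ̇² + ρ²φ̇'²) + U₀/ρ) du is strictly smaller than that of ρ e^{iφ}, the difference being ½[(a/(2kπ+a))² − 1]∫₀^S ρ² φ̇² du < 0, provided ∫₀^S ρ²φ̇² du > 0. Hence an action-minimizing collision-free Kepler arc has total polar-angle variation at most π. -/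
open Set Complex

/-- Direct-path property of planar Kepler minimizers: unwinding the polar angle
by `φ̄(u) = φ(0) + (a/(2kπ+a))(φ(u) − φ(0))` preserves the endpoints (up to the
identification `e^{iφ(S)} = e^{iφ̄(S)}`) and strictly decreases the Kepler
action, the difference being `½[(a/(2kπ+a))² − 1]∫₀^S ρ²φ̇² du < 0` whenever
`∫₀^S ρ²φ̇² du > 0`. -/
theorem direct_path_lower_action
    (U₀ S : ℝ) (hU₀ : 0 < U₀) (hS : 0 < S)
    (ρ φ : ℝ → ℝ)
    (hρpos : ∀ u ∈ Icc (0 : ℝ) S, 0 < ρ u)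
    (k : ℤ) (hk : 1 ≤ k) (a : ℝ) (ha : a ∈ Ioc (-Real.pi) Real.pi)
    (hwind : φ S - φ 0 = 2 * (k : ℝ) * Real.pi + a)
    (φbar : ℝ → ℝ)
    (hφbar : ∀ u, φbar u = φ 0 + (a / (2 * (k : ℝ) * Real.pi + a)) * (φ u - φ 0))
    (hint1 : IntervalIntegrable (fun u => (deriv ρ u) ^ 2)
      MeasureTheory.volume 0 S)
    (hint2 : IntervalIntegrable (fun u => (ρ u) ^ 2 * (deriv φ u) ^ 2)
      MeasureTheory.volume 0 S)
    (hint3 : IntervalIntegrable (fun u => U₀ / ρ u) MeasureTheory.volume 0 S) :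
    -- same endpoints in the plane
    (ρ 0 * Complex.exp (φbar 0 * Complex.I) = ρ 0 * Complex.exp (φ 0 * Complex.I) ∧
     ρ S * Complex.exp (φbar S * Complex.I) = ρ S * Complex.exp (φ S * Complex.I)) ∧
    -- the action difference
    (∫ u in (0 : ℝ)..S,
        ((deriv ρ u) ^ 2 / 2 + (ρ u) ^ 2 * (deriv φbar u) ^ 2 / 2 + U₀ / ρ u)) -
      (∫ u in (0 : ℝ)..S,
        ((deriv ρ u) ^ 2 / 2 + (ρ u) ^ 2 * (deriv φ u) ^ 2 / 2 + U₀ / ρ u)) =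
      (1 / 2) * ((a / (2 * (k : ℝ) * Real.pi + a)) ^ 2 - 1) *
        ∫ u in (0 : ℝ)..S, (ρ u) ^ 2 * (deriv φ u) ^ 2 ∧
    ((0 < ∫ u in (0 : ℝ)..S, (ρ u) ^ 2 * (deriv φ u) ^ 2) →
      (1 / 2) * ((a / (2 * (k : ℝ) * Real.pi + a)) ^ 2 - 1) *
        (∫ u in (0 : ℝ)..S, (ρ u) ^ 2 * (deriv φ u) ^ 2) < 0) := by
  have hπ := Real.pi_pos
  have hk1 : (1 : ℝ) ≤ (k : ℝ) := by exact_mod_cast hk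
  set c : ℝ := a / (2 * (k : ℝ) * Real.pi + a) with hc
  set D : ℝ := 2 * (k : ℝ) * Real.pi + a with hD
  obtain ⟨ha1, ha2⟩ := ha
  have hDpos : 0 < D := by
    have : 2 * (k : ℝ) * Real.pi ≥ 2 * Real.pi := by nlinarith
    nlinarith
  -- |c| < 1
  have hclt : c < 1 := by
    rw [hc, div_lt_one hDpos]; nlinarith
  have hcgt : -1 < c := by
    rw [hc, lt_div_iff₀ hDpos]; nlinarith
  have hc2 : c ^ 2 < 1 := by nlinarith
  -- φbar as an affine function of φ
  have hφbar' : φbar = fun u => c * φ u + (φ 0 - c * φ 0) := by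
    funext u; rw [hφbar u]; ring
  have hderiv : ∀ u, deriv φbar u = c * deriv φ u := by
    intro u
    rw [hφbar']
    rw [deriv_add_const, deriv_const_mul_field]
  -- endpoints
  have hend1 : φbar 0 = φ 0 := by rw [hφbar]; ring
  have hend2 : (φbar S : ℂ) * Complex.I = φ S * Complex.I - k * (2 * Real.pi * Complex.I) := by
    have : φbar S = φ S - 2 * (k : ℝ) * Real.pi := by
      rw [hφbar S, hwind, div_mul_cancel₀ _ (ne_of_gt hDpos)]
      linarith [hwind]
    rw [this]
    push_cast
    ring
  have hexp : Complex.exp (φbar S * Complex.I) = Complex.exp (φ S * Complex.I) := by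
    rw [hend2, Complex.exp_sub, Complex.exp_int_mul_two_pi_mul_I, div_one]
  constructor
  · exact ⟨by rw [hend1], by rw [hexp]⟩
  -- integrals
  have h2' : IntervalIntegrable (fun u => c ^ 2 * ((ρ u) ^ 2 * (deriv φ u) ^ 2))
      MeasureTheory.volume 0 S := hint2.const_mul _
  have heq : (fun u => (deriv ρ u) ^ 2 / 2 + (ρ u) ^ 2 * (deriv φbar u) ^ 2 / 2 + U₀ / ρ u)
      = fun u => ((deriv ρ u) ^ 2 / 2 + U₀ / ρ u)
        + (c ^ 2 / 2) * ((ρ u) ^ 2 * (deriv φ u) ^ 2) := by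
    funext u; rw [hderiv u]; ring
  have heq' : (fun u => (deriv ρ u) ^ 2 / 2 + (ρ u) ^ 2 * (deriv φ u) ^ 2 / 2 + U₀ / ρ u)
      = fun u => ((deriv ρ u) ^ 2 / 2 + U₀ / ρ u)
        + ((1 : ℝ) / 2) * ((ρ u) ^ 2 * (deriv φ u) ^ 2) := by
    funext u; ring
  have hbase : IntervalIntegrable (fun u => (deriv ρ u) ^ 2 / 2 + U₀ / ρ u)
      MeasureTheory.volume 0 S := (hint1.div_const 2).add hint3
  have hA : (∫ u in (0 : ℝ)..S,
      ((deriv ρ u) ^ 2 / 2 + (ρ u) ^ 2 * (deriv φbar u) ^ 2 / 2 + U₀ / ρ u))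
      = (∫ u in (0 : ℝ)..S, ((deriv ρ u) ^ 2 / 2 + U₀ / ρ u))
        + (c ^ 2 / 2) * ∫ u in (0 : ℝ)..S, (ρ u) ^ 2 * (deriv φ u) ^ 2 := by
    rw [heq, intervalIntegral.integral_add hbase (hint2.const_mul _),
      intervalIntegral.integral_const_mul]
  have hB : (∫ u in (0 : ℝ)..S,
      ((deriv ρ u) ^ 2 / 2 + (ρ u) ^ 2 * (deriv φ u) ^ 2 / 2 + U₀ / ρ u))
      = (∫ u in (0 : ℝ)..S, ((deriv ρ u) ^ 2 / 2 + U₀ / ρ u))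
        + ((1 : ℝ) / 2) * ∫ u in (0 : ℝ)..S, (ρ u) ^ 2 * (deriv φ u) ^ 2 := by
    rw [heq', intervalIntegral.integral_add hbase (hint2.const_mul _),
      intervalIntegral.integral_const_mul]
  refine ⟨by rw [hA, hB]; ring, fun hpos => ?_⟩
  have h1 : (1 / 2 : ℝ) * (c ^ 2 - 1) < 0 := by nlinarith
  exact mul_neg_of_neg_of_pos h1 hpos
end
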